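/- arXiv:math/9812169 — 5 statements merged into one kernel-verified Lean document; each statement's English description precedes it below -/
import Mathlib

section
/- Let T(n) be the group generated by involutions σ₁,…,σₙ with all commutators [σᵢ,σⱼ] central of order 2 and no other relations (so |T(n)| = 2^{n + C(n,2)}). Then every involution of T(n) not lying in the subgroup generated by the commutators is of the form σₖ·c for some index k and some central element c; consequently T(n) has exactly n maximal elementary abelian subgroups, namely Uₖ = ⟨σₖ⟩ · Z where Z = ⟨[σᵢ,σⱼ] : i < j⟩, each of rank C(n,2) + 1. -/
open scoped commutatorElement
open scoped IsMulCommutative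

lemma zmod2_cases (u : ZMod 2) : u = 0 ∨ u = 1 := by revert u; decide
lemma zmod2_add_self (u : ZMod 2) : u + u = 0 := by revert u; decide
lemma pow_val_add {M : Type*} [Monoid M] {y : M} (hy : y ^ 2 = 1) (u v : ZMod 2) :
    y ^ (u + v).val = y ^ u.val * y ^ v.val := by
  have e0 : (0 : ZMod 2).val = 0 := rfl
  have e1 : (1 : ZMod 2).val = 1 := rfl
  have e2 : ((1 : ZMod 2) + 1) = 0 := rfl
  rcases zmod2_cases u with rfl | rfl <;> rcases zmod2_cases v with rfl | rfl
  · simp [e0]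
  · simp [e0, e1]
  · simp [e0, e1]
  · rw [e2, e0, pow_zero, e1, pow_one, ← pow_two, hy]

lemma card_pairT (n : ℕ) : Nat.card {p : Fin n × Fin n // p.1 < p.2} = n.choose 2 := by
  have e : {p : Fin n × Fin n // p.1 < p.2} ≃ Σ j : Fin n, Fin j.val :=
    { toFun := fun p => ⟨p.1.2, ⟨p.1.1.val, p.2⟩⟩
      invFun := fun x => ⟨(⟨x.2.val, lt_trans x.2.isLt x.1.isLt⟩, x.1), x.2.isLt⟩
      left_inv := by rintro ⟨⟨a, b⟩, h⟩; rfl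
      right_inv := by rintro ⟨j, v⟩; rfl }
  rw [Nat.card_congr e, Nat.card_eq_fintype_card, Fintype.card_sigma]
  simp only [Fintype.card_fin]
  rw [show (∑ x : Fin n, (x : ℕ)) = ∑ i ∈ Finset.range n, i from
    Fin.sum_univ_eq_sum_range (fun i => i) n, Finset.sum_range_id, Nat.choose_two_right]

lemma comm_mul_aux {G : Type*} [Group G] (a b c : G)
    (h : ∀ g : G, g * ⁅b, c⁆ = ⁅b, c⁆ * g) : ⁅a * b, c⁆ = ⁅a, c⁆ * ⁅b, c⁆ := by
  have hb : b * c * b⁻¹ = ⁅b, c⁆ * c := by group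
  have h1 : ⁅a * b, c⁆ = a * (b * c * b⁻¹) * a⁻¹ * c⁻¹ := by group
  rw [h1, hb]
  have h2 : a * (⁅b, c⁆ * c) * a⁻¹ * c⁻¹ = a * ⁅b, c⁆ * (c * a⁻¹ * c⁻¹) := by group
  rw [h2, h a]
  have h3 : a * (c * a⁻¹ * c⁻¹) = ⁅a, c⁆ := by group
  rw [mul_assoc, h3]
  exact (h ⁅a, c⁆).symm

lemma sq_mul_aux {G : Type*} [Group G] (s g : G) (hs : s ^ 2 = 1)
    (hc : ∀ w : G, w * ⁅g, s⁆ = ⁅g, s⁆ * w) : (s * g) ^ 2 = ⁅g, s⁆ * g ^ 2 := by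
  have h1 : g * s = ⁅g, s⁆ * (s * g) := by group
  have h0 : (s * g) ^ 2 = s * (g * s) * g := by rw [pow_two]; group
  rw [h0, h1]
  have h2 : s * (⁅g, s⁆ * (s * g)) * g = s * ⁅g, s⁆ * (s * g * g) := by group
  rw [h2, hc s]
  have h3 : ⁅g, s⁆ * s * (s * g * g) = ⁅g, s⁆ * (s ^ 2 * g ^ 2) := by
    rw [pow_two, pow_two]; group
  rw [h3, hs, one_mul]


/-- A subgroup is elementary abelian (of exponent 2) iff all its elements square to 1. -/
def IsElemAb2 {G : Type} [Group G] (H : Subgroup G) : Prop :=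
  ∀ h ∈ H, h ^ 2 = 1

/-- Let `T(n)` be the group generated by involutions `σ₁,…,σₙ` with all
commutators `⁅σᵢ,σⱼ⁆` central of order 2 and no other relations (so
`|T(n)| = 2^(n + C(n,2))`).  Then every involution of `T(n)` not lying in the subgroup `Z`
generated by the commutators is of the form `σₖ·c` for some index `k` and some central
element `c`; consequently `T(n)` has exactly `n` maximal elementary abelian subgroups,
namely `Uₖ = ⟨σₖ⟩·Z`, each of rank `C(n,2) + 1` (i.e. of order `2^(C(n,2)+1)`). -/
theorem stmt5 {n : ℕ} (hn : 0 < n) {G : Type} [Group G] [Finite G]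
    (σ : Fin n → G)
    (hgen : Subgroup.closure (Set.range σ) = ⊤)
    (hinv : ∀ i, σ i ^ 2 = 1)
    (hcent : ∀ i j, ⁅σ i, σ j⁆ ∈ Subgroup.center G)
    (hc2 : ∀ i j, ⁅σ i, σ j⁆ ^ 2 = 1)
    (hcard : Nat.card G = 2 ^ (n + n.choose 2)) :
    (∀ g : G, g ^ 2 = 1 →
        g ∉ Subgroup.closure {g | ∃ i j, g = ⁅σ i, σ j⁆} →
        ∃ k : Fin n, ∃ c ∈ Subgroup.center G, g = σ k * c) ∧
    ({H : Subgroup G | IsElemAb2 H ∧ ∀ K : Subgroup G, IsElemAb2 K → H ≤ K → H = K}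
        = Set.range fun k : Fin n =>
            Subgroup.closure ({σ k} ∪ {g | ∃ i j, g = ⁅σ i, σ j⁆})) ∧
    (Function.Injective fun k : Fin n =>
        Subgroup.closure ({σ k} ∪ {g | ∃ i j, g = ⁅σ i, σ j⁆})) ∧
    (∀ k : Fin n,
        Nat.card (Subgroup.closure ({σ k} ∪ {g | ∃ i j, g = ⁅σ i, σ j⁆}))
          = 2 ^ (n.choose 2 + 1)) := by
  classical
  set Cset : Set G := {g | ∃ i j, g = ⁅σ i, σ j⁆} with hCset
  set Z : Subgroup G := Subgroup.closure Cset with hZdef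
  have hZle : Z ≤ Subgroup.center G := by
    rw [hZdef]
    exact (Subgroup.closure_le _).mpr (by rintro g ⟨i, j, rfl⟩; exact hcent i j)
  have hcen : ∀ z ∈ Subgroup.center G, ∀ w : G, w * z = z * w :=
    fun z hz w => Subgroup.mem_center_iff.mp hz w
  haveI hZn : Z.Normal := by
    constructor
    intro z hz g
    have h : g * z = z * g := hcen z (hZle hz) g
    have : g * z * g⁻¹ = z := by rw [h, mul_inv_cancel_right]
    rwa [this]
  set π : G →* G ⧸ Z := QuotientGroup.mk' Z with hπdef
  have hπsurj : Function.Surjective π := QuotientGroup.mk'_surjective Z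
  have memZ : ∀ g : G, π g = 1 ↔ g ∈ Z := fun g => QuotientGroup.eq_one_iff g
  -- quotient is commutative
  have hcomm : ∀ x y : G ⧸ Z, x * y = y * x := by
    intro x y
    obtain ⟨a, rfl⟩ := hπsurj x
    obtain ⟨b, rfl⟩ := hπsurj y
    have ha : a ∈ Subgroup.closure (Set.range σ) := by rw [hgen]; trivial
    have hb : b ∈ Subgroup.closure (Set.range σ) := by rw [hgen]; trivial
    refine Subgroup.closure_induction₂
      (p := fun x y _ _ => π x * π y = π y * π x) ?_ ?_ ?_ ?_ ?_ ?_ ?_ ha hb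
    · rintro _ _ ⟨i, rfl⟩ ⟨j, rfl⟩
      have h1 : π ⁅σ i, σ j⁆ = 1 := (memZ _).mpr (Subgroup.subset_closure ⟨i, j, rfl⟩)
      rw [map_commutatorElement] at h1
      exact commutatorElement_eq_one_iff_mul_comm.mp h1
    · intro x hx; simp
    · intro x hx; simp
    · intro x y z _ _ _ h1 h2
      rw [map_mul, mul_assoc, h2, ← mul_assoc, h1, mul_assoc]
    · intro y z x _ _ _ h1 h2
      rw [map_mul, ← mul_assoc, h1, mul_assoc, h2, ← mul_assoc]
    · intro x y _ _ hxy
      rw [map_inv]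
      exact Commute.inv_left hxy
    · intro x y _ _ hxy
      rw [map_inv]
      exact Commute.inv_right hxy
  letI : CommGroup (G ⧸ Z) := { (inferInstance : Group (G ⧸ Z)) with mul_comm := hcomm }
  -- the quotient-side product map
  set t : Fin n → G ⧸ Z := fun i => π (σ i) with htdef
  have ht2 : ∀ i, t i ^ 2 = 1 := fun i => by
    rw [htdef]; dsimp only; rw [← map_pow, hinv, map_one]
  set φQ : (Fin n → ZMod 2) → G ⧸ Z := fun a => ∏ i, t i ^ (a i).val with hφQdef
  have φQ_add : ∀ a b, φQ (a + b) = φQ a * φQ b := by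
    intro a b
    rw [hφQdef]; dsimp only
    rw [← Finset.prod_mul_distrib]
    exact Finset.prod_congr rfl fun i _ => by rw [Pi.add_apply, pow_val_add (ht2 i)]
  have φQ_zero : φQ 0 = 1 := by
    rw [hφQdef]; dsimp only
    exact Finset.prod_eq_one fun i _ => by rw [Pi.zero_apply, ZMod.val_zero, pow_zero]
  have φQ_sq : ∀ a, φQ a * φQ a = 1 := by
    intro a
    rw [← φQ_add]
    have : a + a = 0 := funext fun i => zmod2_add_self (a i)
    rw [this, φQ_zero]
  have φQ_single : ∀ k : Fin n, φQ (fun i => if i = k then 1 else 0) = t k := by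
    intro k
    rw [hφQdef]; dsimp only
    rw [Finset.prod_eq_single k (fun b _ hb => by rw [if_neg hb, ZMod.val_zero, pow_zero])
      (fun h => absurd (Finset.mem_univ k) h)]
    rw [if_pos rfl, ZMod.val_one, pow_one]
  have φQ_surj : Function.Surjective φQ := by
    intro x
    have hx : x ∈ Subgroup.closure (Set.range t) := by
      have hrt : Set.range t = π '' Set.range σ := by
        rw [htdef]; exact (Set.range_comp π σ).trans rfl
      have : Subgroup.closure (Set.range t) = ⊤ := by
        rw [hrt, ← MonoidHom.map_closure, hgen]
        rw [← MonoidHom.range_eq_map]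
        exact MonoidHom.range_eq_top.mpr hπsurj
      rw [this]; trivial
    refine Subgroup.closure_induction (p := fun y _ => ∃ a, φQ a = y) ?_ ?_ ?_ ?_ hx
    · rintro _ ⟨k, rfl⟩
      exact ⟨_, φQ_single k⟩
    · exact ⟨0, φQ_zero⟩
    · rintro _ _ _ _ ⟨a, rfl⟩ ⟨b, rfl⟩
      exact ⟨a + b, φQ_add a b⟩
    · rintro _ _ ⟨a, rfl⟩
      exact ⟨a, (inv_eq_of_mul_eq_one_right (φQ_sq a)).symm⟩
  -- the center-side product map, indexed by ordered pairs
  have cc2' : ∀ i j : Fin n, (⟨⁅σ i, σ j⁆, hcent i j⟩ : Subgroup.center G) ^ 2 = 1 := by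
    intro i j
    exact Subtype.ext (by rw [SubgroupClass.coe_pow]; exact hc2 i j)
  have ccsymm : ∀ i j : Fin n,
      (⟨⁅σ i, σ j⁆, hcent i j⟩ : Subgroup.center G) = ⟨⁅σ j, σ i⁆, hcent j i⟩ := by
    intro i j
    refine Subtype.ext ?_
    show ⁅σ i, σ j⁆ = ⁅σ j, σ i⁆
    rw [← commutatorElement_inv]
    exact inv_eq_of_mul_eq_one_right (by rw [← pow_two]; exact hc2 j i)
  set φC : ({p : Fin n × Fin n // p.1 < p.2} → ZMod 2) → Subgroup.center G :=
    fun b => ∏ p, (⟨⁅σ p.1.1, σ p.1.2⁆, hcent _ _⟩ : Subgroup.center G) ^ (b p).val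
    with hφCdef
  have φC_add : ∀ b b', φC (b + b') = φC b * φC b' := by
    intro b b'
    rw [hφCdef]; dsimp only
    rw [← Finset.prod_mul_distrib]
    exact Finset.prod_congr rfl fun p _ => by rw [Pi.add_apply, pow_val_add (cc2' _ _)]
  have φC_zero : φC 0 = 1 := by
    rw [hφCdef]; dsimp only
    exact Finset.prod_eq_one fun p _ => by rw [Pi.zero_apply, ZMod.val_zero, pow_zero]
  have φC_sq : ∀ b, φC b * φC b = 1 := by
    intro b
    rw [← φC_add]
    have hb0 : b + b = 0 := funext fun p => zmod2_add_self (b p)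
    rw [hb0, φC_zero]
  have φC_vsq : ∀ b, ((φC b : Subgroup.center G) : G) * ((φC b : Subgroup.center G) : G) = 1 := by
    intro b
    have h1 := congrArg Subtype.val (φC_sq b)
    push_cast at h1
    exact h1
  have φC_single : ∀ p0 : {p : Fin n × Fin n // p.1 < p.2},
      φC (fun p => if p = p0 then 1 else 0) = ⟨⁅σ p0.1.1, σ p0.1.2⁆, hcent _ _⟩ := by
    intro p0
    rw [hφCdef]; dsimp only
    rw [Finset.prod_eq_single p0 (fun b _ hb => by rw [if_neg hb, ZMod.val_zero, pow_zero])
      (fun h => absurd (Finset.mem_univ p0) h)]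
    rw [if_pos rfl, ZMod.val_one, pow_one]
  have Zval : ∀ b, ((φC b : Subgroup.center G) : G) ∈ Z := by
    intro b
    have : φC b ∈ Subgroup.comap (Subgroup.center G).subtype Z := by
      rw [hφCdef]; dsimp only
      refine Subgroup.prod_mem _ fun p _ => Subgroup.pow_mem _ ?_ _
      rw [Subgroup.mem_comap]
      exact Subgroup.subset_closure ⟨p.1.1, p.1.2, rfl⟩
    rwa [Subgroup.mem_comap] at this
  have hCb : ∀ i j : Fin n, ∃ b, ((φC b : Subgroup.center G) : G) = ⁅σ i, σ j⁆ := by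
    intro i j
    rcases lt_trichotomy i j with h | h | h
    · exact ⟨fun p => if p = ⟨(i, j), h⟩ then 1 else 0, by rw [φC_single]⟩
    · subst h
      exact ⟨0, by rw [φC_zero, commutatorElement_self]; rfl⟩
    · refine ⟨fun p => if p = ⟨(j, i), h⟩ then 1 else 0, ?_⟩
      rw [φC_single]
      show ⁅σ j, σ i⁆ = ⁅σ i, σ j⁆
      exact congrArg Subtype.val (ccsymm j i)
  have Zsurj : ∀ z ∈ Z, ∃ b, ((φC b : Subgroup.center G) : G) = z := by
    intro z hz
    rw [hZdef] at hz
    refine Subgroup.closure_induction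
      (p := fun y _ => ∃ b, ((φC b : Subgroup.center G) : G) = y) ?_ ?_ ?_ ?_ hz
    · rintro _ ⟨i, j, rfl⟩
      exact hCb i j
    · exact ⟨0, by rw [φC_zero]; rfl⟩
    · rintro _ _ _ _ ⟨b, rfl⟩ ⟨b', rfl⟩
      refine ⟨b + b', ?_⟩
      rw [φC_add]
      push_cast
      rfl
    · rintro y _ ⟨b, rfl⟩
      exact ⟨b, (inv_eq_of_mul_eq_one_right (φC_vsq b)).symm⟩
  -- counting
  have hcardQdom : Nat.card (Fin n → ZMod 2) = 2 ^ n := by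
    rw [Nat.card_fun, Nat.card_zmod, Nat.card_eq_fintype_card, Fintype.card_fin]
  have hcardCdom : Nat.card ({p : Fin n × Fin n // p.1 < p.2} → ZMod 2) = 2 ^ n.choose 2 := by
    rw [Nat.card_fun, Nat.card_zmod, card_pairT]
  set ψC : ({p : Fin n × Fin n // p.1 < p.2} → ZMod 2) → Z :=
    fun b => ⟨((φC b : Subgroup.center G) : G), Zval b⟩ with hψCdef
  have ψC_surj : Function.Surjective ψC := by
    rintro ⟨z, hz⟩
    obtain ⟨b, hb⟩ := Zsurj z hz
    exact ⟨b, Subtype.ext hb⟩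
  have hQle : Nat.card (G ⧸ Z) ≤ 2 ^ n := by
    rw [← hcardQdom]
    exact Nat.card_le_card_of_surjective φQ φQ_surj
  have hZleC : Nat.card Z ≤ 2 ^ n.choose 2 := by
    rw [← hcardCdom]
    exact Nat.card_le_card_of_surjective ψC ψC_surj
  have hGeq : Nat.card (G ⧸ Z) * Nat.card Z = 2 ^ n * 2 ^ n.choose 2 := by
    rw [← Subgroup.card_eq_card_quotient_mul_card_subgroup, hcard, pow_add]
  have hQcard : Nat.card (G ⧸ Z) = 2 ^ n := by
    by_contra hne
    have hlt : Nat.card (G ⧸ Z) < 2 ^ n := lt_of_le_of_ne hQle hne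
    have hZpos : 0 < Nat.card Z := Nat.card_pos
    have : Nat.card (G ⧸ Z) * Nat.card Z < 2 ^ n * 2 ^ n.choose 2 :=
      lt_of_lt_of_le ((Nat.mul_lt_mul_right hZpos).mpr hlt)
        (Nat.mul_le_mul_left _ hZleC)
    omega
  have hZcard : Nat.card Z = 2 ^ n.choose 2 := by
    have h2 : (0:ℕ) < 2 ^ n := Nat.pow_pos (n := n) (by norm_num)
    have := hGeq
    rw [hQcard] at this
    exact Nat.eq_of_mul_eq_mul_left h2 this
  -- injectivity of the parametrizations
  have φQ_inj : Function.Injective φQ := by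
    have hb : Function.Bijective φQ :=
      (Nat.bijective_iff_surjective_and_card φQ).mpr ⟨φQ_surj, by rw [hcardQdom, hQcard]⟩
    exact hb.1
  have ψC_inj : Function.Injective ψC := by
    have hb : Function.Bijective ψC :=
      (Nat.bijective_iff_surjective_and_card ψC).mpr ⟨ψC_surj, by rw [hcardCdom, hZcard]⟩
    exact hb.1
  have φC_inj : Function.Injective φC := by
    intro b b' h
    exact ψC_inj (Subtype.ext (by rw [hψCdef]; dsimp only; rw [h]))
  have φQ_eq_zero : ∀ a, φQ a = 1 → a = 0 := fun a h => φQ_inj (by rw [h, φQ_zero])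
  have φC_eq_zero : ∀ b, φC b = 1 → b = 0 := fun b h => φC_inj (by rw [h, φC_zero])
  -- all commutators are central
  have hcommZ : ∀ x y : G, ⁅x, y⁆ ∈ Z := by
    intro x y
    rw [← memZ, map_commutatorElement]
    exact commutatorElement_eq_one_iff_mul_comm.mpr (hcomm _ _)
  have hcommcent : ∀ x y : G, ⁅x, y⁆ ∈ Subgroup.center G := fun x y => hZle (hcommZ x y)
  -- the commutator homomorphisms
  set ψh : Fin n → G →* Subgroup.center G := fun j =>
    { toFun := fun x => ⟨⁅x, σ j⁆, hcommcent _ _⟩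
      map_one' := Subtype.ext (by show ⁅(1:G), σ j⁆ = 1; group)
      map_mul' := fun a b => Subtype.ext
        (comm_mul_aux a b (σ j) (fun w => hcen _ (hcommcent b (σ j)) w)) }
    with hψhdef
  have ψh_ker : ∀ (j : Fin n) (z : G), z ∈ Z → ψh j z = 1 := by
    intro j z hz
    refine Subtype.ext ?_
    show ⁅z, σ j⁆ = 1
    rw [commutatorElement_eq_one_iff_mul_comm]
    exact (hcen z (hZle hz) (σ j)).symm
  set ψb : Fin n → (G ⧸ Z) →* Subgroup.center G :=
    fun j => QuotientGroup.lift Z (ψh j) (ψh_ker j) with hψbdef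
  have ψb_mk : ∀ (j : Fin n) (g : G), ψb j (π g) = ψh j g := fun j g => rfl
  have ψb_φQ : ∀ (j : Fin n) (a : Fin n → ZMod 2),
      ψb j (φQ a) = ∏ i, (⟨⁅σ i, σ j⁆, hcent i j⟩ : Subgroup.center G) ^ (a i).val := by
    intro j a
    rw [hφQdef]; dsimp only
    rw [map_prod]
    refine Finset.prod_congr rfl fun i _ => ?_
    rw [map_pow]
    congr 1
  -- reindexing products of commutators with a fixed index
  have reindex : ∀ (j : Fin n) (w : Fin n → ZMod 2), w j = 0 →
      (∏ i, (⟨⁅σ i, σ j⁆, hcent i j⟩ : Subgroup.center G) ^ (w i).val)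
        = φC (fun p => if p.1.2 = j then w p.1.1 else if p.1.1 = j then w p.1.2 else 0) := by
    intro j w hwj
    rw [hφCdef]; dsimp only
    have hL : (∏ i, (⟨⁅σ i, σ j⁆, hcent i j⟩ : Subgroup.center G) ^ (w i).val)
        = ∏ i ∈ Finset.univ.erase j, (⟨⁅σ i, σ j⁆, hcent i j⟩ : Subgroup.center G) ^ (w i).val := by
      refine (Finset.prod_subset (Finset.subset_univ _) ?_).symm
      intro i _ hi
      have : i = j := by
        by_contra hij
        exact hi (Finset.mem_erase.mpr ⟨hij, Finset.mem_univ i⟩)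
      rw [this, hwj, ZMod.val_zero, pow_zero]
    have hR : (∏ p : {p : Fin n × Fin n // p.1 < p.2},
          (⟨⁅σ p.1.1, σ p.1.2⁆, hcent _ _⟩ : Subgroup.center G) ^
            ((if p.1.2 = j then w p.1.1 else if p.1.1 = j then w p.1.2 else 0) : ZMod 2).val)
        = ∏ p ∈ Finset.univ.filter (fun p : {p : Fin n × Fin n // p.1 < p.2} =>
            p.1.1 = j ∨ p.1.2 = j),
          (⟨⁅σ p.1.1, σ p.1.2⁆, hcent _ _⟩ : Subgroup.center G) ^
            ((if p.1.2 = j then w p.1.1 else if p.1.1 = j then w p.1.2 else 0) : ZMod 2).val := by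
      refine (Finset.prod_subset (Finset.filter_subset _ _) ?_).symm
      intro p _ hp
      have h1 : ¬(p.1.1 = j ∨ p.1.2 = j) := by
        intro h
        exact hp (Finset.mem_filter.mpr ⟨Finset.mem_univ p, h⟩)
      push_neg at h1
      rw [if_neg h1.2, if_neg h1.1, ZMod.val_zero, pow_zero]
    rw [hL, hR]
    refine Finset.prod_bij
      (fun i hi => if h : i < j then (⟨(i, j), h⟩ : {p : Fin n × Fin n // p.1 < p.2}) else
        ⟨(j, i), lt_of_le_of_ne (not_lt.mp h) (Ne.symm (Finset.mem_erase.mp hi).1)⟩)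
      ?_ ?_ ?_ ?_
    · intro a ha
      by_cases h : a < j
      · rw [dif_pos h]
        exact Finset.mem_filter.mpr ⟨Finset.mem_univ _, Or.inr rfl⟩
      · rw [dif_neg h]
        exact Finset.mem_filter.mpr ⟨Finset.mem_univ _, Or.inl rfl⟩
    · intro a₁ ha₁ a₂ ha₂ heq
      have h₁ : a₁ ≠ j := (Finset.mem_erase.mp ha₁).1
      have h₂ : a₂ ≠ j := (Finset.mem_erase.mp ha₂).1
      by_cases h1 : a₁ < j <;> by_cases h2 : a₂ < j
      · rw [dif_pos h1, dif_pos h2] at heq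
        exact congrArg (fun p => p.1.1) heq
      · rw [dif_pos h1, dif_neg h2] at heq
        exact absurd (congrArg (fun p => p.1.2) heq).symm h₂
      · rw [dif_neg h1, dif_pos h2] at heq
        exact absurd (congrArg (fun p => p.1.2) heq) h₁
      · rw [dif_neg h1, dif_neg h2] at heq
        exact congrArg (fun p => p.1.2) heq
    · intro p hp
      rcases Finset.mem_filter.mp hp with ⟨-, hp1 | hp2⟩
      · refine ⟨p.1.2, Finset.mem_erase.mpr ⟨(hp1 ▸ p.2).ne', Finset.mem_univ _⟩, ?_⟩
        rw [dif_neg (not_lt.mpr (le_of_lt (hp1 ▸ p.2)))]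
        exact Subtype.ext (Prod.ext hp1.symm rfl)
      · refine ⟨p.1.1, Finset.mem_erase.mpr ⟨(hp2 ▸ p.2).ne, Finset.mem_univ _⟩, ?_⟩
        rw [dif_pos (hp2 ▸ p.2)]
        exact Subtype.ext (Prod.ext rfl hp2.symm)
    · intro a ha
      have hane : a ≠ j := (Finset.mem_erase.mp ha).1
      by_cases h : a < j
      · simp [dif_pos h]
      · simp only [dif_neg h]
        rw [ccsymm a j]
        congr 1
        simp [hane]
  -- the square of any element, in terms of its quotient coordinates
  set qf : (Fin n → ZMod 2) → ({p : Fin n × Fin n // p.1 < p.2} → ZMod 2) :=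
    fun a p => a p.1.1 * a p.1.2 with hqfdef
  have hsq : ∀ (N : ℕ) (a : Fin n → ZMod 2) (g : G),
      (Finset.univ.filter (fun i => a i = 1)).card = N →
      π g = φQ a → g ^ 2 = ((φC (qf a) : Subgroup.center G) : G) := by
    intro N
    induction N using Nat.strong_induction_on with
    | _ N IH =>
      intro a g hcardN hg
      by_cases hS : (Finset.univ.filter (fun i => a i = 1)) = ∅
      · have ha0 : a = 0 := by
          funext i
          rcases zmod2_cases (a i) with h | h
          · exact h
          · exact absurd (hS ▸ Finset.mem_filter.mpr ⟨Finset.mem_univ i, h⟩)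
              (Finset.notMem_empty i)
        have hgZ : g ∈ Z := by
          rw [← memZ, hg, ha0, φQ_zero]
        obtain ⟨b, hb⟩ := Zsurj g hgZ
        have hqf0 : qf a = 0 := by
          funext p
          rw [hqfdef]; dsimp only
          rw [ha0]
          simp
        rw [hqf0, φC_zero, ← hb, pow_two, φC_vsq b]
        rfl
      · obtain ⟨j, hj⟩ := Finset.nonempty_iff_ne_empty.mpr hS
        have haj : a j = 1 := (Finset.mem_filter.mp hj).2
        set a' : Fin n → ZMod 2 := Function.update a j 0 with ha'def
        set g' : G := σ j * g with hg'def
        have ha'j : a' j = 0 := by rw [ha'def]; simp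
        have hg' : π g' = φQ a' := by
          have h1 : (fun i => if i = j then (1 : ZMod 2) else 0) + a = a' := by
            funext i
            by_cases h : i = j
            · subst h
              simp [haj, ha'def, zmod2_add_self]
            · simp [h, ha'def, Function.update_of_ne h]
          rw [hg'def, map_mul, hg, show π (σ j) = t j from rfl, ← φQ_single j, ← φQ_add, h1]
        have hfilter : Finset.univ.filter (fun i => a' i = 1)
            = (Finset.univ.filter (fun i => a i = 1)).erase j := by
          ext i
          rw [Finset.mem_erase, Finset.mem_filter, Finset.mem_filter]
          constructor
          · intro hi
            have hij : i ≠ j := by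
              intro h
              rw [h, ha'j] at hi
              exact absurd hi.2 (by decide)
            rw [ha'def] at hi
            rw [Function.update_of_ne hij] at hi
            exact ⟨hij, hi⟩
          · intro ⟨hij, hi⟩
            rw [ha'def]
            rw [show (Function.update a j 0 i) = a i from Function.update_of_ne hij 0 a]
            exact ⟨hi.1, hi.2⟩
        have hlt : ((Finset.univ.filter (fun i => a' i = 1)).card) < N := by
          rw [hfilter, ← hcardN]
          exact Finset.card_erase_lt_of_mem hj
        have IH' := IH _ hlt a' g' rfl hg'
        have hgeq : g = σ j * g' := by
          rw [hg'def, ← mul_assoc, ← pow_two, hinv, one_mul]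
        have hcentgj : ∀ w : G, w * ⁅g', σ j⁆ = ⁅g', σ j⁆ * w :=
          fun w => hcen _ (hcommcent g' (σ j)) w
        have hkey : g ^ 2 = ⁅g', σ j⁆ * g' ^ 2 := by
          rw [hgeq]
          exact sq_mul_aux (σ j) g' (hinv j) hcentgj
        have hzval : ⁅g', σ j⁆ = ((ψb j (φQ a') : Subgroup.center G) : G) := by
          rw [← hg', ψb_mk]
          rfl
        rw [hkey, IH', hzval, ψb_φQ j a', reindex j a' ha'j]
        rw [show ((φC (fun p => if p.1.2 = j then a' p.1.1 else
            if p.1.1 = j then a' p.1.2 else 0) : Subgroup.center G) : G) *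
            ((φC (qf a') : Subgroup.center G) : G)
          = ((φC ((fun p => if p.1.2 = j then a' p.1.1 else
              if p.1.1 = j then a' p.1.2 else 0) + qf a') : Subgroup.center G) : G) from by
          rw [φC_add]; push_cast; rfl]
        congr 2
        funext p
        rw [hqfdef]; dsimp only [Pi.add_apply]
        rcases p with ⟨⟨u, v⟩, huv⟩
        dsimp only
        by_cases hv : v = j
        · subst hv
          have hu : u ≠ v := ne_of_lt huv
          rw [if_pos rfl, ha'def]
          rw [Function.update_of_ne hu, Function.update_self]
          simp [haj]
        · by_cases hu : u = j
          · subst hu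
            rw [if_neg hv, if_pos rfl, ha'def]
            rw [Function.update_of_ne hv, Function.update_self]
            simp [haj]
          · rw [if_neg hv, if_neg hu, ha'def]
            rw [Function.update_of_ne hu, Function.update_of_ne hv]
            simp
  -- structure of involutions
  have main1 : ∀ g : G, g ^ 2 = 1 → g ∉ Z → ∃ k : Fin n, ∃ c, c ∈ Z ∧ g = σ k * c := by
    intro g hg2 hgZ
    obtain ⟨a, ha⟩ := φQ_surj (π g)
    have hsqg := hsq _ a g rfl ha.symm
    have hqf0 : qf a = 0 := by
      apply φC_eq_zero
      refine Subtype.ext ?_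
      show ((φC (qf a) : Subgroup.center G) : G) = 1
      rw [← hsqg, hg2]
    have hane : a ≠ 0 := by
      intro h
      apply hgZ
      rw [← memZ, ← ha, h, φQ_zero]
    obtain ⟨k, hk⟩ : ∃ k, a k = 1 := by
      by_contra h
      push_neg at h
      exact hane (funext fun i => (zmod2_cases (a i)).resolve_right (h i))
    have honly : ∀ i, i ≠ k → a i = 0 := by
      intro i hik
      rcases zmod2_cases (a i) with h | h
      · exact h
      · rcases lt_or_gt_of_ne hik with hlt | hgt
        · have hq := congrFun hqf0 (⟨(i, k), hlt⟩ : {p : Fin n × Fin n // p.1 < p.2})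
          rw [hqfdef] at hq; dsimp only at hq
          rw [h, hk, Pi.zero_apply] at hq
          exact absurd hq (by decide)
        · have hq := congrFun hqf0 (⟨(k, i), hgt⟩ : {p : Fin n × Fin n // p.1 < p.2})
          rw [hqfdef] at hq; dsimp only at hq
          rw [h, hk, Pi.zero_apply] at hq
          exact absurd hq (by decide)
    have haeq : a = fun i => if i = k then 1 else 0 := by
      funext i
      by_cases h : i = k
      · rw [if_pos h, h, hk]
      · rw [if_neg h, honly i h]
    refine ⟨k, σ k * g, ?_, ?_⟩
    · rw [← memZ, map_mul, ← ha, haeq, show π (σ k) = t k from rfl, ← φQ_single k]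
      exact φQ_sq _
    · rw [← mul_assoc, ← pow_two, hinv, one_mul]
  -- distinct commutators of generators are nontrivial
  have hccne : ∀ k m : Fin n, k ≠ m → ⁅σ k, σ m⁆ ≠ 1 := by
    intro k m hkm h1
    have key : ∀ (u v : Fin n) (huv : u < v), ⁅σ u, σ v⁆ = 1 → False := by
      intro u v huv huv1
      have h2 : φC (fun p => if p = (⟨(u, v), huv⟩ : {p : Fin n × Fin n // p.1 < p.2})
          then 1 else 0) = 1 := by
        rw [φC_single]
        exact Subtype.ext huv1
      have h3 := congrFun (φC_eq_zero _ h2) (⟨(u, v), huv⟩ : {p : Fin n × Fin n // p.1 < p.2})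
      rw [if_pos rfl, Pi.zero_apply] at h3
      exact absurd h3 (by decide)
    rcases lt_or_gt_of_ne hkm with hlt | hgt
    · exact key k m hlt h1
    · refine key m k hgt ?_
      rw [← commutatorElement_inv, h1, inv_one]
  -- central elements can be moved around
  have swap_center : ∀ x y c : G, c ∈ Subgroup.center G → x * c * y = x * y * c := by
    intro x y c hc
    rw [mul_assoc, ← hcen c hc y, ← mul_assoc]
  have cancel_comm : ∀ x y c c' : G, c ∈ Subgroup.center G → c' ∈ Subgroup.center G →
      (x * c) * (y * c') = (y * c') * (x * c) → x * y = y * x := by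
    intro x y c c' hc hc' h
    have h1 : (x * c) * (y * c') = (x * y) * (c * c') := by
      rw [← mul_assoc, swap_center x y c hc, mul_assoc]
    have h2 : (y * c') * (x * c) = (y * x) * (c * c') := by
      rw [← mul_assoc, swap_center y x c' hc', mul_assoc, hcen c hc c']
    rw [h1, h2] at h
    exact mul_right_cancel h
  -- the subgroups U k
  set U : Fin n → Subgroup G := fun k => Subgroup.closure ({σ k} ∪ Cset) with hUdef
  have hZU : ∀ k, Z ≤ U k := by
    intro k
    rw [hZdef, hUdef]
    exact Subgroup.closure_mono Set.subset_union_right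
  have hσU : ∀ k, σ k ∈ U k := fun k => Subgroup.subset_closure (Or.inl rfl)
  have sqone : ∀ (k : Fin n) (e : ZMod 2) (b : {p : Fin n × Fin n // p.1 < p.2} → ZMod 2),
      (σ k ^ e.val * ((φC b : Subgroup.center G) : G))
        * (σ k ^ e.val * ((φC b : Subgroup.center G) : G)) = 1 := by
    intro k e b
    rw [← mul_assoc, swap_center _ _ _ (SetLike.coe_mem (φC b)), mul_assoc, ← pow_val_add (hinv k),
      zmod2_add_self, ZMod.val_zero, pow_zero, one_mul]
    exact φC_vsq b
  have φQ_single' : ∀ (k : Fin n) (e : ZMod 2),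
      φQ (fun i => if i = k then e else 0) = t k ^ e.val := by
    intro k e
    rw [hφQdef]; dsimp only
    rw [Finset.prod_eq_single k (fun b _ hb => by rw [if_neg hb, ZMod.val_zero, pow_zero])
      (fun h => absurd (Finset.mem_univ k) h), if_pos rfl]
  have hUmem : ∀ (k : Fin n) (g : G), g ∈ U k ↔
      ∃ (e : ZMod 2) (b : {p : Fin n × Fin n // p.1 < p.2} → ZMod 2),
        g = σ k ^ e.val * ((φC b : Subgroup.center G) : G) := by
    intro k g
    constructor
    · intro hg
      rw [hUdef] at hg
      refine Subgroup.closure_induction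
        (p := fun y _ => ∃ (e : ZMod 2) (b : {p : Fin n × Fin n // p.1 < p.2} → ZMod 2), y = σ k ^ e.val * ((φC b : Subgroup.center G) : G)) ?_ ?_ ?_ ?_ hg
      · rintro x (rfl | hx)
        · refine ⟨1, 0, ?_⟩
          rw [φC_zero, ZMod.val_one, pow_one]
          simp
        · obtain ⟨i, j, rfl⟩ := hx
          obtain ⟨b, hb⟩ := hCb i j
          refine ⟨0, b, ?_⟩
          rw [hb, ZMod.val_zero, pow_zero, one_mul]
      · refine ⟨0, 0, ?_⟩
        rw [φC_zero, ZMod.val_zero, pow_zero]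
        simp
      · rintro x y _ _ ⟨e, b, rfl⟩ ⟨e', b', rfl⟩
        refine ⟨e + e', b + b', ?_⟩
        rw [pow_val_add (hinv k), φC_add]
        rw [show ((((φC b * φC b') : Subgroup.center G)) : G)
          = ((φC b : Subgroup.center G) : G) * ((φC b' : Subgroup.center G) : G) from rfl]
        rw [show σ k ^ e.val * ((φC b : Subgroup.center G) : G)
              * (σ k ^ e'.val * ((φC b' : Subgroup.center G) : G))
            = (σ k ^ e.val * ((φC b : Subgroup.center G) : G) * σ k ^ e'.val)
              * ((φC b' : Subgroup.center G) : G) from (mul_assoc _ _ _).symm]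
        rw [swap_center _ _ _ (SetLike.coe_mem (φC b))]
        rw [mul_assoc (σ k ^ e.val * σ k ^ e'.val)]
      · rintro x _ ⟨e, b, rfl⟩
        exact ⟨e, b, inv_eq_of_mul_eq_one_right (sqone k e b)⟩
    · rintro ⟨e, b, rfl⟩
      exact mul_mem (pow_mem (hσU k) _) (hZU k (Zval b))
  have hU2 : ∀ k, IsElemAb2 (U k) := by
    intro k h hh
    obtain ⟨e, b, rfl⟩ := (hUmem k h).mp hh
    rw [pow_two]
    exact sqone k e b
  have hUinj : Function.Injective U := by
    intro k m hkm
    by_contra hne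
    obtain ⟨e, b, hb⟩ := (hUmem m (σ k)).mp (hkm ▸ hσU k)
    have h2 : π (σ k) = π (σ m) ^ e.val := by
      rw [hb, map_mul, map_pow, (memZ _).mpr (Zval b), mul_one]
    have h3 : φQ (fun i => if i = k then 1 else 0) = φQ (fun i => if i = m then e else 0) := by
      rw [φQ_single, φQ_single']
      exact h2
    have h4 := congrFun (φQ_inj h3) k
    rw [if_pos rfl, if_neg hne] at h4
    exact absurd h4 (by decide)
  have hUcard : ∀ k, Nat.card (U k) = 2 ^ (n.choose 2 + 1) := by
    intro k
    set ρ : ZMod 2 × ({p : Fin n × Fin n // p.1 < p.2} → ZMod 2) → U k :=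
      fun x => ⟨σ k ^ x.1.val * ((φC x.2 : Subgroup.center G) : G),
        (hUmem k _).mpr ⟨x.1, x.2, rfl⟩⟩ with hρdef
    have hρbij : Function.Bijective ρ := by
      constructor
      · rintro ⟨e, b⟩ ⟨e', b'⟩ heq
        have h0 : σ k ^ e.val * ((φC b : Subgroup.center G) : G)
            = σ k ^ e'.val * ((φC b' : Subgroup.center G) : G) := congrArg Subtype.val heq
        have h1 : π (σ k) ^ e.val = π (σ k) ^ e'.val := by
          have h5 := congrArg π h0
          rw [map_mul, map_mul, map_pow, map_pow, (memZ _).mpr (Zval b),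
            (memZ _).mpr (Zval b'), mul_one, mul_one] at h5
          exact h5
        have he : e = e' := by
          have h6 : φQ (fun i => if i = k then e else 0)
              = φQ (fun i => if i = k then e' else 0) := by
            rw [φQ_single', φQ_single']
            exact h1
          have h7 := congrFun (φQ_inj h6) k
          rwa [if_pos rfl, if_pos rfl] at h7
        subst he
        have h8 : ((φC b : Subgroup.center G) : G) = ((φC b' : Subgroup.center G) : G) :=
          mul_left_cancel h0
        exact Prod.ext rfl (φC_inj (Subtype.ext h8))
      · rintro ⟨g, hg⟩
        obtain ⟨e, b, hb⟩ := (hUmem k g).mp hg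
        exact ⟨(e, b), Subtype.ext hb.symm⟩
    rw [← Nat.card_eq_of_bijective ρ hρbij, Nat.card_prod, Nat.card_zmod, Nat.card_fun,
      Nat.card_zmod, card_pairT, pow_succ, Nat.mul_comm]
  -- elementary abelian subgroups are commutative
  have hKcomm : ∀ K : Subgroup G, IsElemAb2 K → ∀ x ∈ K, ∀ y ∈ K, x * y = y * x := by
    intro K hK x hx y hy
    have hxy : (x * y) * (x * y) = 1 := by rw [← pow_two]; exact hK _ (mul_mem hx hy)
    have hxx : x * x = 1 := by rw [← pow_two]; exact hK _ hx
    have hyy : y * y = 1 := by rw [← pow_two]; exact hK _ hy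
    have h1 : x * y = (x * y)⁻¹ := (inv_eq_of_mul_eq_one_right hxy).symm
    rw [h1, mul_inv_rev, inv_eq_of_mul_eq_one_right hyy, inv_eq_of_mul_eq_one_right hxx]
  have hUmax : ∀ k, ∀ K : Subgroup G, IsElemAb2 K → U k ≤ K → U k = K := by
    intro k K hK hUK
    refine le_antisymm hUK ?_
    intro h hh
    by_cases hhZ : h ∈ Z
    · exact hZU k hhZ
    · obtain ⟨m, c, hcZ, rfl⟩ := main1 h (hK h hh) hhZ
      have hcc : σ k * (σ m * c) = (σ m * c) * σ k := hKcomm K hK _ (hUK (hσU k)) _ hh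
      have hcc' : (σ k * 1) * (σ m * c) = (σ m * c) * (σ k * 1) := by
        rw [mul_one]
        exact hcc
      have hcomm_km : σ k * σ m = σ m * σ k :=
        cancel_comm (σ k) (σ m) 1 c (Subgroup.one_mem _) (hZle hcZ) hcc'
      have hkm : k = m := by
        by_contra hkm
        exact hccne k m hkm (commutatorElement_eq_one_iff_mul_comm.mpr hcomm_km)
      subst hkm
      exact mul_mem (hσU k) (hZU k hcZ)
  -- assemble the four statements
  refine ⟨?_, ?_, ?_, ?_⟩
  · intro g hg2 hgZ
    obtain ⟨k, c, hcZ, hgc⟩ := main1 g hg2 hgZ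
    exact ⟨k, c, hZle hcZ, hgc⟩
  · ext H
    simp only [Set.mem_setOf_eq, Set.mem_range]
    constructor
    · rintro ⟨hH2, hHmax⟩
      by_cases hHZ : ∃ h ∈ H, h ∉ Z
      · obtain ⟨h, hh, hhZ⟩ := hHZ
        obtain ⟨m, c, hcZ, rfl⟩ := main1 h (hH2 h hh) hhZ
        refine ⟨m, (hHmax (U m) (hU2 m) ?_).symm⟩
        intro x hx
        by_cases hxZ : x ∈ Z
        · exact hZU m hxZ
        · obtain ⟨m', c', hc'Z, rfl⟩ := main1 x (hH2 x hx) hxZ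
          have hcc := hKcomm H hH2 _ hh _ hx
          have hcomm2 : σ m * σ m' = σ m' * σ m :=
            cancel_comm (σ m) (σ m') c c' (hZle hcZ) (hZle hc'Z) hcc
          have hmm : m = m' := by
            by_contra hmm
            exact hccne m m' hmm (commutatorElement_eq_one_iff_mul_comm.mpr hcomm2)
          subst hmm
          exact mul_mem (hσU m) (hZU m hc'Z)
      · push_neg at hHZ
        exact ⟨⟨0, hn⟩, (hHmax (U ⟨0, hn⟩) (hU2 _) fun x hx => hZU _ (hHZ x hx)).symm⟩
    · rintro ⟨k, rfl⟩
      exact ⟨hU2 k, hUmax k⟩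
  · exact hUinj
  · intro k
    exact hUcard k
end

section
/- Let T(n) be as above with generators σ₁,…,σₙ, and let P(n) ⊆ T(n) be the subgroup generated by σ₁σ₂, σ₁σ₃, …, σ₁σₙ together with all commutators [σᵢ,σⱼ]. Then P(n) has index 2 in T(n), and T(n) is isomorphic to the semidirect product P(n) ⋊ ℤ/2 where the generator of ℤ/2 acts by inverting each of the n−1 generators σ₁σᵢ of P(n). -/
open scoped commutatorElement

/-- A subgroup generated by finitely many commuting elements of order dividing 2
has cardinality at most `2 ^ (number of generators)`. -/
lemma stmt6_card_closure_le {H : Type*} [CommGroup H] {ι : Type*} [Fintype ι]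
    (s : ι → H) (hs : ∀ i, s i * s i = 1) :
    Nat.card (Subgroup.closure (Set.range s)) ≤ 2 ^ Fintype.card ι := by
  classical
  set f : (ι → Bool) → H := fun e => ∏ i, if e i then s i else 1 with hf
  have hmul : ∀ e e', f e * f e' = f (fun i => xor (e i) (e' i)) := by
    intro e e'
    simp only [hf, ← Finset.prod_mul_distrib]
    refine Finset.prod_congr rfl fun i _ => ?_
    have key : ∀ a b : Bool,
        ((if a = true then s i else 1) * if b = true then s i else 1) =
          if (a ^^ b) = true then s i else 1 := by
      intro a b; cases a <;> cases b <;> simp [hs i]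
    exact key (e i) (e' i)
  have hone : f (fun _ => false) = 1 := by simp [hf]
  have hinvf : ∀ e, (f e)⁻¹ = f e := by
    intro e
    have h : f e * f e = 1 := by
      rw [hmul]
      convert hone using 2
      funext i; simp
    exact inv_eq_of_mul_eq_one_right h
  set K' : Subgroup H :=
    { carrier := Set.range f
      one_mem' := ⟨fun _ => false, hone⟩
      mul_mem' := by rintro _ _ ⟨e, rfl⟩ ⟨e', rfl⟩; exact ⟨_, (hmul e e').symm⟩
      inv_mem' := by rintro _ ⟨e, rfl⟩; exact ⟨e, (hinvf e).symm⟩ } with hK'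
  have hle : Subgroup.closure (Set.range s) ≤ K' := by
    rw [Subgroup.closure_le]
    rintro _ ⟨i, rfl⟩
    refine ⟨fun j => decide (j = i), ?_⟩
    simp [hf]
  have hsurj : Function.Surjective (fun e => (⟨f e, ⟨e, rfl⟩⟩ : K')) := by
    rintro ⟨_, e, rfl⟩; exact ⟨e, rfl⟩
  haveI : Finite K' := Finite.of_surjective _ hsurj
  have h1 : Nat.card (Subgroup.closure (Set.range s)) ≤ Nat.card K' :=
    Nat.card_le_card_of_injective _ (Subgroup.inclusion_injective hle)
  have h2 : Nat.card K' ≤ Nat.card (ι → Bool) :=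
    Nat.card_le_card_of_surjective _ hsurj
  have h3 : Nat.card (ι → Bool) = 2 ^ Fintype.card ι := by
    simp [Nat.card_eq_fintype_card]
  omega

/-- A group generated by pairwise commuting elements is commutative. -/
lemma stmt6_comm_of_gen {H : Type*} [Group H] {S : Set H} (hS : Subgroup.closure S = ⊤)
    (hcomm : ∀ a ∈ S, ∀ b ∈ S, a * b = b * a) (x y : H) : x * y = y * x := by
  have step1 : ∀ z ∈ S, ∀ w : H, z * w = w * z := by
    intro z hz w
    have hle : Subgroup.closure S ≤ Subgroup.centralizer {z} := by
      rw [Subgroup.closure_le]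
      intro a ha
      rw [SetLike.mem_coe, Subgroup.mem_centralizer_iff]
      rintro h rfl
      exact hcomm h hz a ha
    exact Subgroup.mem_centralizer_iff.mp (hle (hS ▸ Subgroup.mem_top w)) z rfl
  have hle : Subgroup.closure S ≤ Subgroup.centralizer {y} := by
    rw [Subgroup.closure_le]
    intro a ha
    rw [SetLike.mem_coe, Subgroup.mem_centralizer_iff]
    rintro h rfl
    exact (step1 a ha h).symm
  exact (Subgroup.mem_centralizer_iff.mp (hle (hS ▸ Subgroup.mem_top x)) y rfl).symm

lemma stmt6_card_pairs (n : ℕ) :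
    Fintype.card {p : Fin n × Fin n // p.1 < p.2} = n.choose 2 := by
  have e : {p : Fin n × Fin n // p.1 < p.2} ≃ Σ j : Fin n, Fin j.val :=
    { toFun := fun p => ⟨p.1.2, ⟨p.1.1.val, p.2⟩⟩
      invFun := fun q => ⟨(⟨q.2.val, lt_trans q.2.isLt q.1.isLt⟩, q.1), q.2.isLt⟩
      left_inv := fun p => rfl
      right_inv := fun q => rfl }
  rw [Fintype.card_congr e, Fintype.card_sigma]
  simp only [Fintype.card_fin]
  rw [Fin.sum_univ_eq_sum_range (fun i => i) n, Nat.choose_two_right]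
  have := Finset.sum_range_id_mul_two n
  omega

/-- Let `T(n)` be the group generated by involutions `σ₁,…,σₙ` with all
commutators `⁅σᵢ,σⱼ⁆` central of order 2 and no further relations
(`|T(n)| = 2^(n+C(n,2))`), and let `P(n) ⊆ T(n)` be the subgroup generated by
`σ₁σ₂, …, σ₁σₙ` together with all commutators `⁅σᵢ,σⱼ⁆`.  Then `P(n)` has index 2 in
`T(n)`, and `T(n)` is isomorphic to the semidirect product `P(n) ⋊ ℤ/2` where the generator
of `ℤ/2` acts by inverting each of the `n−1` generators `σ₁σᵢ` of `P(n)`.  The semidirect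
product decomposition is formalized internally: `P(n)` is normal, intersects the order-2
subgroup `⟨σ₁⟩` trivially, generates `T(n)` together with it, and conjugation by `σ₁`
inverts each generator `σ₁σᵢ`. -/
theorem stmt6 {n : ℕ} (hn : 0 < n) {G : Type} [Group G] [Finite G]
    (σ : Fin n → G)
    (hgen : Subgroup.closure (Set.range σ) = ⊤)
    (hinv : ∀ i, σ i ^ 2 = 1)
    (hcent : ∀ i j, ⁅σ i, σ j⁆ ∈ Subgroup.center G)
    (hc2 : ∀ i j, ⁅σ i, σ j⁆ ^ 2 = 1)
    (hcard : Nat.card G = 2 ^ (n + n.choose 2)) :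
    letI σ₁ : G := σ ⟨0, hn⟩
    letI P : Subgroup G := Subgroup.closure
      ((Set.range fun i : Fin n => σ₁ * σ i) ∪ {g | ∃ i j, g = ⁅σ i, σ j⁆})
    P.index = 2 ∧ P.Normal ∧
    orderOf σ₁ = 2 ∧
    Disjoint P (Subgroup.zpowers σ₁) ∧
    P ⊔ Subgroup.zpowers σ₁ = ⊤ ∧
    ∀ i : Fin n, σ₁ * (σ₁ * σ i) * σ₁⁻¹ = (σ₁ * σ i)⁻¹ := by
  classical
  set σ₁ : G := σ ⟨0, hn⟩ with hσ₁def
  set P : Subgroup G := Subgroup.closure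
    ((Set.range fun i : Fin n => σ₁ * σ i) ∪ {g | ∃ i j, g = ⁅σ i, σ j⁆}) with hPdef
  -- basic involution facts
  have hσ1sq : σ₁ * σ₁ = 1 := by
    have h := hinv ⟨0, hn⟩; rwa [pow_two] at h
  have hσinv : ∀ i, (σ i)⁻¹ = σ i := fun i =>
    inv_eq_of_mul_eq_one_right (by rw [← pow_two]; exact hinv i)
  have h1inv : σ₁⁻¹ = σ₁ := hσinv ⟨0, hn⟩
  -- conjugation identity
  have hconj : ∀ i : Fin n, σ₁ * (σ₁ * σ i) * σ₁⁻¹ = (σ₁ * σ i)⁻¹ := by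
    intro i
    have h : σ₁ * (σ₁ * σ i) = σ i := by rw [← mul_assoc, hσ1sq, one_mul]
    rw [h, mul_inv_rev, hσinv i, h1inv]
  -- the commutator subgroup candidate
  set K : Subgroup G := Subgroup.closure {g | ∃ i j, g = ⁅σ i, σ j⁆} with hK
  have hKle : K ≤ Subgroup.center G := by
    rw [hK, Subgroup.closure_le]
    rintro g ⟨i, j, rfl⟩
    exact hcent i j
  haveI hKnormal : K.Normal := by
    constructor
    intro k hk g
    have hc := Subgroup.mem_center_iff.mp (hKle hk)
    have : g * k * g⁻¹ = k := by rw [hc g]; simp [mul_assoc]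
    rwa [this]
  -- quotient by K is commutative
  set mkK : G →* G ⧸ K := QuotientGroup.mk' K with hmkK
  have hmkKsurj : Function.Surjective mkK := QuotientGroup.mk'_surjective K
  have hQgen : Subgroup.closure (Set.range fun i => mkK (σ i)) = ⊤ := by
    have h := MonoidHom.map_closure mkK (Set.range σ)
    rw [hgen, Subgroup.map_top_of_surjective _ hmkKsurj] at h
    rw [← Set.range_comp] at h
    exact h.symm
  have hQcomm : ∀ x y : G ⧸ K, x * y = y * x := by
    refine stmt6_comm_of_gen hQgen ?_
    rintro _ ⟨i, rfl⟩ _ ⟨j, rfl⟩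
    have h1 : mkK ⁅σ i, σ j⁆ = 1 := by
      rw [← MonoidHom.mem_ker, hmkK, QuotientGroup.ker_mk']
      exact Subgroup.subset_closure ⟨i, j, rfl⟩
    rw [map_commutatorElement] at h1
    exact (commutatorElement_eq_one_iff_commute.mp h1).eq
  have hcommK : ∀ g h : G, ⁅g, h⁆ ∈ K := by
    intro g h
    have h1 : mkK ⁅g, h⁆ = 1 := by
      rw [map_commutatorElement]
      exact commutatorElement_eq_one_iff_commute.mpr (hQcomm _ _)
    rwa [← MonoidHom.mem_ker, hmkK, QuotientGroup.ker_mk'] at h1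
  -- K ≤ P
  have hKP : K ≤ P := Subgroup.closure_mono Set.subset_union_right
  -- P is normal
  haveI hPnormal : P.Normal := by
    constructor
    intro p hp g
    have h : g * p * g⁻¹ = ⁅g, p⁆ * p := by group
    rw [h]
    exact mul_mem (hKP (hcommK g p)) hp
  -- cardinality bound for K
  have hcardK : Nat.card K ≤ 2 ^ n.choose 2 := by
    set s' : {p : Fin n × Fin n // p.1 < p.2} → Subgroup.center G :=
      fun p => ⟨⁅σ p.1.1, σ p.1.2⁆, hcent _ _⟩ with hs'
    have hs2 : ∀ p, s' p * s' p = 1 := by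
      intro p
      ext
      show ⁅σ p.1.1, σ p.1.2⁆ * ⁅σ p.1.1, σ p.1.2⁆ = 1
      rw [← pow_two]; exact hc2 _ _
    letI : CommGroup (Subgroup.center G) :=
      { (inferInstance : Group (Subgroup.center G)) with mul_comm := mul_comm' }
    have hb := stmt6_card_closure_le s' hs2
    rw [stmt6_card_pairs n] at hb
    have hKeq : K = Subgroup.map (Subgroup.center G).subtype
        (Subgroup.closure (Set.range s')) := by
      apply le_antisymm
      · rw [hK, Subgroup.closure_le]
        rintro _ ⟨i, j, rfl⟩
        rcases lt_trichotomy i j with hij | rfl | hij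
        · exact ⟨s' ⟨(i, j), hij⟩, Subgroup.subset_closure ⟨_, rfl⟩, rfl⟩
        · rw [commutatorElement_self]
          exact one_mem _
        · rw [← commutatorElement_inv]
          exact inv_mem ⟨s' ⟨(j, i), hij⟩, Subgroup.subset_closure ⟨_, rfl⟩, rfl⟩
      · rw [MonoidHom.map_closure]
        apply Subgroup.closure_le K |>.mpr
        rintro _ ⟨_, ⟨p, rfl⟩, rfl⟩
        exact Subgroup.subset_closure ⟨p.1.1, p.1.2, rfl⟩
    rw [hKeq]
    have he := (Subgroup.equivMapOfInjective (Subgroup.closure (Set.range s'))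
      (Subgroup.center G).subtype (Subgroup.subtype_injective _)).toEquiv
    rw [← Nat.card_congr he]
    exact hb
  -- the key fact: σ₁ ∉ P
  have hσ₁P : σ₁ ∉ P := by
    intro hσ₁P
    -- get a commutative group structure on G ⧸ K
    letI : CommGroup (G ⧸ K) := { (inferInstance : Group (G ⧸ K)) with mul_comm := hQcomm }
    set t : {i : Fin n // ¬ i = (⟨0, hn⟩ : Fin n)} → G ⧸ K :=
      fun i => mkK σ₁ * mkK (σ i.1) with ht
    have ht2 : ∀ i, t i * t i = 1 := by
      intro i
      rw [ht]
      show (mkK σ₁ * mkK (σ i.1)) * (mkK σ₁ * mkK (σ i.1)) = 1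
      have h := hinv i.1
      rw [pow_two] at h
      rw [mul_mul_mul_comm, ← map_mul, ← map_mul, hσ1sq, h]
      simp
    -- image of P lies in the closure of range t
    have hPim : P ≤ Subgroup.comap mkK (Subgroup.closure (Set.range t)) := by
      rw [Subgroup.closure_le]
      rintro g (⟨i, rfl⟩ | ⟨i, j, rfl⟩)
      · show mkK (σ₁ * σ i) ∈ Subgroup.closure (Set.range t)
        by_cases hi : i = (⟨0, hn⟩ : Fin n)
        · subst hi
          rw [show σ₁ * σ (⟨0, hn⟩ : Fin n) = 1 from hσ1sq, map_one]
          exact one_mem _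
        · rw [map_mul]
          exact Subgroup.subset_closure ⟨⟨i, hi⟩, rfl⟩
      · show mkK ⁅σ i, σ j⁆ ∈ Subgroup.closure (Set.range t)
        have h1 : mkK ⁅σ i, σ j⁆ = 1 := by
          rw [← MonoidHom.mem_ker, hmkK, QuotientGroup.ker_mk']
          exact Subgroup.subset_closure ⟨i, j, rfl⟩
        rw [h1]; exact one_mem _
    have hσ₁im : mkK σ₁ ∈ Subgroup.closure (Set.range t) := hPim hσ₁P
    -- closure of range t is everything
    have htop : Subgroup.closure (Set.range t) = ⊤ := by
      rw [Subgroup.eq_top_iff']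
      intro q
      obtain ⟨g, rfl⟩ := hmkKsurj q
      have hg : g ∈ Subgroup.comap mkK (Subgroup.closure (Set.range t)) := by
        have hle : Subgroup.closure (Set.range σ) ≤
            Subgroup.comap mkK (Subgroup.closure (Set.range t)) := by
          rw [Subgroup.closure_le]
          rintro _ ⟨i, rfl⟩
          show mkK (σ i) ∈ Subgroup.closure (Set.range t)
          by_cases hi : i = (⟨0, hn⟩ : Fin n)
          · subst hi; exact hσ₁im
          · have : mkK (σ i) = (mkK σ₁)⁻¹ * (mkK σ₁ * mkK (σ i)) := by group
            rw [this]
            exact mul_mem (inv_mem hσ₁im) (Subgroup.subset_closure ⟨⟨i, hi⟩, rfl⟩)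
        exact hle (hgen ▸ Subgroup.mem_top g)
      exact hg
    -- cardinality bound for the quotient
    have hcardι : Fintype.card {i : Fin n // ¬ i = (⟨0, hn⟩ : Fin n)} = n - 1 := by
      rw [Fintype.card_subtype_compl, Fintype.card_subtype_eq, Fintype.card_fin]
    have hcardQ : Nat.card (G ⧸ K) ≤ 2 ^ (n - 1) := by
      have hb := stmt6_card_closure_le t ht2
      rw [htop, hcardι] at hb
      rwa [Subgroup.card_top] at hb
    -- contradiction with the total cardinality
    have htotal := Subgroup.card_eq_card_quotient_mul_card_subgroup K
    have hpos : 0 < n.choose 2 + 1 := Nat.succ_pos _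
    have hlt : Nat.card G ≤ 2 ^ (n - 1) * 2 ^ n.choose 2 := by
      rw [htotal]
      exact Nat.mul_le_mul hcardQ hcardK
    rw [hcard, ← pow_add] at hlt
    have : n + n.choose 2 ≤ n - 1 + n.choose 2 := by
      exact (Nat.pow_le_pow_iff_right (by norm_num)).mp hlt
    omega
  -- orderOf σ₁ = 2
  have horder : orderOf σ₁ = 2 :=
    orderOf_eq_prime (hinv ⟨0, hn⟩) (fun h => hσ₁P (h ▸ one_mem P))
  -- σ₁ squared as an integer power
  have h2z : σ₁ ^ (2 : ℤ) = 1 := by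
    rw [show ((2 : ℤ)) = ((2 : ℕ) : ℤ) from rfl, zpow_natCast]
    exact hinv ⟨0, hn⟩
  -- Disjointness
  have hdisj : Disjoint P (Subgroup.zpowers σ₁) := by
    rw [Subgroup.disjoint_def]
    intro x hxP hxZ
    obtain ⟨k, rfl⟩ := Subgroup.mem_zpowers_iff.mp hxZ
    rcases Int.even_or_odd k with ⟨m, rfl⟩ | ⟨m, rfl⟩
    · have : σ₁ ^ (m + m) = (σ₁ ^ (2 : ℤ)) ^ m := by
        rw [← zpow_mul]; ring_nf
      rw [this, h2z, one_zpow]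
    · exfalso
      have : σ₁ ^ (2 * m + 1) = σ₁ := by
        rw [zpow_add, zpow_mul, h2z, one_zpow, one_mul, zpow_one]
      rw [this] at hxP
      exact hσ₁P hxP
  -- Join is everything
  have hsup : P ⊔ Subgroup.zpowers σ₁ = ⊤ := by
    apply le_antisymm le_top
    rw [← hgen, Subgroup.closure_le]
    rintro _ ⟨i, rfl⟩
    have h : σ i = σ₁ * (σ₁ * σ i) := by rw [← mul_assoc, hσ1sq, one_mul]
    rw [SetLike.mem_coe, h]
    exact mul_mem (Subgroup.mem_sup_right (Subgroup.mem_zpowers σ₁))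
      (Subgroup.mem_sup_left (Subgroup.subset_closure (Or.inl ⟨i, rfl⟩)))
  -- Index 2
  have hindex : P.index = 2 := by
    set mkP : G →* G ⧸ P := QuotientGroup.mk' P with hmkP
    set x : G ⧸ P := mkP σ₁ with hx
    have hx2 : x ^ 2 = 1 := by rw [hx, ← map_pow, hinv, map_one]
    have hx1 : x ≠ 1 := by
      intro h
      exact hσ₁P ((QuotientGroup.eq_one_iff σ₁).mp h)
    have hxorder : orderOf x = 2 := orderOf_eq_prime hx2 hx1
    have hzp : Subgroup.zpowers x = ⊤ := by
      rw [Subgroup.eq_top_iff']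
      intro q
      obtain ⟨g, rfl⟩ := QuotientGroup.mk'_surjective P q
      have hle : Subgroup.closure (Set.range σ) ≤
          Subgroup.comap mkP (Subgroup.zpowers x) := by
        rw [Subgroup.closure_le]
        rintro _ ⟨i, rfl⟩
        show mkP (σ i) ∈ Subgroup.zpowers x
        have hmem : σ₁ * σ i ∈ P :=
          Subgroup.subset_closure (Or.inl ⟨i, rfl⟩)
        have h1 : mkP (σ₁ * σ i) = 1 := (QuotientGroup.eq_one_iff _).mpr hmem
        rw [map_mul] at h1
        have : mkP (σ i) = x⁻¹ := (inv_eq_of_mul_eq_one_right h1).symm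
        rw [this]
        exact inv_mem (Subgroup.mem_zpowers x)
      exact hle (hgen ▸ Subgroup.mem_top g)
    rw [Subgroup.index_eq_card, ← Subgroup.card_top, ← hzp, Nat.card_zpowers, hxorder]
  exact ⟨hindex, hPnormal, horder, hdisj, hsup, hconj⟩
end

section
/- In the group P(n) ⊂ T(n) generated by the elements τᵢ = σ₁σᵢ₊₁ (i = 1,…,n−1) and the central commutators, every square τᵢ² is central, and every element of P(n) has order dividing 4. Hence P(n) is a homomorphic image of the universal W-group W(n−1). -/
open scoped commutatorElement

open Subgroup

section aux
variable {G : Type*} [Group G] {S : Set G}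

/-- induction principle over a generating set -/
private lemma gen_ind (hgen : Subgroup.closure S = ⊤) (P : G → Prop)
    (hS : ∀ a ∈ S, P a) (h1 : P 1)
    (hmul : ∀ x y, P x → P y → P (x * y)) (hinv : ∀ x, P x → P x⁻¹) :
    ∀ x : G, P x := by
  intro x
  have hx : x ∈ Subgroup.closure S := hgen ▸ Subgroup.mem_top x
  exact Subgroup.closure_induction (fun a ha => hS a ha) h1
    (fun a b _ _ ha hb => hmul a b ha hb) (fun a _ ha => hinv a ha) hx

lemma comm_central_all (hgen : Subgroup.closure S = ⊤)
    (h : ∀ a ∈ S, ∀ b ∈ S, ⁅a, b⁆ ∈ Subgroup.center G) :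
    ∀ x y : G, ⁅x, y⁆ ∈ Subgroup.center G := by
  have step1 : ∀ b ∈ S, ∀ x : G, ⁅x, b⁆ ∈ Subgroup.center G := by
    intro b hb
    refine gen_ind hgen _ (fun a ha => h a ha b hb) ?_ ?_ ?_
    · have e : ⁅(1:G), b⁆ = 1 := by group
      rw [e]; exact Subgroup.one_mem _
    · intro x y hx hy
      have e : ⁅x * y, b⁆ = x * ⁅y, b⁆ * x⁻¹ * ⁅x, b⁆ := by group
      have e2 : x * ⁅y, b⁆ = ⁅y, b⁆ * x := Subgroup.mem_center_iff.mp hy x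
      rw [e, e2, mul_assoc ⁅y, b⁆ x, mul_inv_cancel, mul_one]
      exact mul_mem hy hx
    · intro x hx
      have e : ⁅x⁻¹, b⁆ = x⁻¹ * ⁅x, b⁆⁻¹ * x := by group
      have hx' : ⁅x, b⁆⁻¹ ∈ Subgroup.center G := inv_mem hx
      have e2 : x⁻¹ * ⁅x, b⁆⁻¹ = ⁅x, b⁆⁻¹ * x⁻¹ := Subgroup.mem_center_iff.mp hx' x⁻¹
      rw [e, e2, mul_assoc, inv_mul_cancel, mul_one]
      exact hx'
  intro x
  refine gen_ind hgen _ (fun b hb => step1 b hb x) ?_ ?_ ?_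
  · have e : ⁅x, (1:G)⁆ = 1 := by group
    rw [e]; exact Subgroup.one_mem _
  · intro y z hy hz
    have e : ⁅x, y * z⁆ = ⁅x, y⁆ * (y * ⁅x, z⁆ * y⁻¹) := by group
    have e2 : y * ⁅x, z⁆ = ⁅x, z⁆ * y := Subgroup.mem_center_iff.mp hz y
    rw [e, e2, mul_assoc ⁅x, z⁆ y, mul_inv_cancel, mul_one]
    exact mul_mem hy hz
  · intro y hy
    have e : ⁅x, y⁻¹⁆ = y⁻¹ * ⁅x, y⁆⁻¹ * y := by group
    have hy' : ⁅x, y⁆⁻¹ ∈ Subgroup.center G := inv_mem hy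
    have e2 : y⁻¹ * ⁅x, y⁆⁻¹ = ⁅x, y⁆⁻¹ * y⁻¹ := Subgroup.mem_center_iff.mp hy' y⁻¹
    rw [e, e2, mul_assoc, inv_mul_cancel, mul_one]
    exact hy'

variable (Hc : ∀ x y : G, ⁅x, y⁆ ∈ Subgroup.center G)

include Hc

lemma comm_mul_left (x y z : G) : ⁅x * y, z⁆ = ⁅x, z⁆ * ⁅y, z⁆ := by
  have e : ⁅x * y, z⁆ = x * ⁅y, z⁆ * x⁻¹ * ⁅x, z⁆ := by group
  have e2 : x * ⁅y, z⁆ = ⁅y, z⁆ * x := Subgroup.mem_center_iff.mp (Hc y z) x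
  have e3 : ⁅y, z⁆ * ⁅x, z⁆ = ⁅x, z⁆ * ⁅y, z⁆ := Subgroup.mem_center_iff.mp (Hc x z) ⁅y, z⁆
  rw [e, e2, mul_assoc ⁅y, z⁆ x, mul_inv_cancel, mul_one, e3]

lemma comm_mul_right (x y z : G) : ⁅x, y * z⁆ = ⁅x, y⁆ * ⁅x, z⁆ := by
  have e : ⁅x, y * z⁆ = ⁅x, y⁆ * (y * ⁅x, z⁆ * y⁻¹) := by group
  have e2 : y * ⁅x, z⁆ = ⁅x, z⁆ * y := Subgroup.mem_center_iff.mp (Hc x z) y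
  rw [e, e2, mul_assoc ⁅x, z⁆ y, mul_inv_cancel, mul_one]

lemma comm_sq_all (hgen : Subgroup.closure S = ⊤)
    (h2 : ∀ a ∈ S, ∀ b ∈ S, ⁅a, b⁆ ^ 2 = 1) :
    ∀ x y : G, ⁅x, y⁆ ^ 2 = 1 := by
  have cmm : ∀ x y u v : G, Commute ⁅x, y⁆ ⁅u, v⁆ := fun x y u v =>
    Subgroup.mem_center_iff.mp (Hc u v) _
  have step1 : ∀ b ∈ S, ∀ x : G, ⁅x, b⁆ ^ 2 = 1 := by
    intro b hb
    refine gen_ind hgen _ (fun a ha => h2 a ha b hb) ?_ ?_ ?_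
    · have e : ⁅(1:G), b⁆ = 1 := by group
      rw [e]; exact one_pow 2
    · intro x y hx hy
      rw [comm_mul_left Hc, (cmm x b y b).mul_pow, hx, hy, one_mul]
    · intro x hx
      have e : ⁅x⁻¹, b⁆ = ⁅x, b⁆⁻¹ := by
        have := comm_mul_left Hc x⁻¹ x b
        rw [inv_mul_cancel] at this
        have e1 : ⁅(1:G), b⁆ = 1 := by group
        rw [e1] at this
        exact eq_inv_of_mul_eq_one_left this.symm
      rw [e, inv_pow, hx, inv_one]
  intro x
  refine gen_ind hgen _ (fun b hb => step1 b hb x) ?_ ?_ ?_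
  · have e : ⁅x, (1:G)⁆ = 1 := by group
    rw [e]; exact one_pow 2
  · intro y z hy hz
    rw [comm_mul_right Hc, (cmm x y x z).mul_pow, hy, hz, one_mul]
  · intro y hy
    have e : ⁅x, y⁻¹⁆ = ⁅x, y⁆⁻¹ := by
      have := comm_mul_right Hc x y⁻¹ y
      rw [inv_mul_cancel] at this
      have e1 : ⁅x, (1:G)⁆ = 1 := by group
      rw [e1] at this
      exact eq_inv_of_mul_eq_one_left this.symm
    rw [e, inv_pow, hy, inv_one]

lemma sq_central_pow4 (hgen : Subgroup.closure S = ⊤)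
    (hS : ∀ a ∈ S, a ^ 2 = 1)
    (Hc2 : ∀ x y : G, ⁅x, y⁆ ^ 2 = 1) :
    ∀ x : G, x ^ 2 ∈ Subgroup.center G ∧ x ^ 4 = 1 := by
  refine gen_ind hgen _ ?_ ?_ ?_ ?_
  · intro a ha
    refine ⟨by rw [hS a ha]; exact Subgroup.one_mem _, ?_⟩
    have : a ^ 4 = (a ^ 2) ^ 2 := by group
    rw [this, hS a ha, one_pow]
  · exact ⟨by rw [one_pow]; exact Subgroup.one_mem _, one_pow 4⟩
  · intro x y hx hy
    have e : (x * y) ^ 2 = x ^ 2 * y ^ 2 * ⁅y⁻¹, x⁻¹⁆ := by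
      have e2 : ⁅y⁻¹, x⁻¹⁆ * y = y * ⁅y⁻¹, x⁻¹⁆ :=
        (Subgroup.mem_center_iff.mp (Hc y⁻¹ x⁻¹) y).symm
      calc (x * y) ^ 2 = x * x * y * (⁅y⁻¹, x⁻¹⁆ * y) := by
            rw [pow_two, commutatorElement_def]; group
        _ = x * x * y * (y * ⁅y⁻¹, x⁻¹⁆) := by rw [e2]
        _ = x ^ 2 * y ^ 2 * ⁅y⁻¹, x⁻¹⁆ := by rw [pow_two x, pow_two y]; simp [mul_assoc]
    have hcen : (x * y) ^ 2 ∈ Subgroup.center G := by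
      rw [e]; exact mul_mem (mul_mem hx.1 hy.1) (Hc _ _)
    refine ⟨hcen, ?_⟩
    have e4 : (x * y) ^ 4 = ((x * y) ^ 2) ^ 2 := by group
    have c1 : Commute (x ^ 2) (y ^ 2) := Subgroup.mem_center_iff.mp hy.1 _
    have c2 : Commute (x ^ 2 * y ^ 2) ⁅y⁻¹, x⁻¹⁆ :=
      (Subgroup.mem_center_iff.mp (Hc y⁻¹ x⁻¹) _)
    rw [e4, e, c2.mul_pow, c1.mul_pow]
    have hx4 : (x ^ 2) ^ 2 = x ^ 4 := by group
    have hy4 : (y ^ 2) ^ 2 = y ^ 4 := by group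
    rw [hx4, hy4, hx.2, hy.2, Hc2, one_mul, one_mul]
  · intro x hx
    have e : (x⁻¹) ^ 2 = (x ^ 2)⁻¹ := by group
    have e4 : (x⁻¹) ^ 4 = (x ^ 4)⁻¹ := by group
    exact ⟨by rw [e]; exact inv_mem hx.1, by rw [e4, hx.2, inv_one]⟩

end aux

/-- In the group `P(n) ⊂ T(n)` generated by the elements `τᵢ = σ₁σᵢ₊₁`
(`i = 1,…,n−1`) and the central commutators, every square `τᵢ²` is central in `P(n)`, and
every element of `P(n)` has order dividing 4.  Hence `P(n)` is a homomorphic image of the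
universal W-group `W(n−1)` (encoded by its universal property: every map of the `n−1`
generators of `W(n−1)` into a finite 2-group in which squares are central and all elements
have order dividing 4 extends to a homomorphism). -/
theorem stmt7 {n : ℕ} (hn : 0 < n) {G : Type} [Group G] [Finite G]
    (σ : Fin n → G)
    (hgen : Subgroup.closure (Set.range σ) = ⊤)
    (hinv : ∀ i, σ i ^ 2 = 1)
    (hcent : ∀ i j, ⁅σ i, σ j⁆ ∈ Subgroup.center G)
    (hc2 : ∀ i j, ⁅σ i, σ j⁆ ^ 2 = 1)
    (hcard : Nat.card G = 2 ^ (n + n.choose 2))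
    -- the universal W-group `W(n-1)` with generators `w i`:
    {W : Type} [Group W] [Finite W] (w : Fin (n - 1) → W)
    (hWgen : Subgroup.closure (Set.range w) = ⊤)
    (hW4 : ∀ x : W, x ^ 4 = 1)
    (hWsq : ∀ x : W, x ^ 2 ∈ Subgroup.center W)
    (hWuniv : ∀ (H : Type) [Group H] [Finite H],
      (∀ x : H, x ^ 4 = 1) → (∀ x : H, x ^ 2 ∈ Subgroup.center H) →
      ∀ f : Fin (n - 1) → H, ∃ φ : W →* H, ∀ i, φ (w i) = f i) :
    letI τ : Fin (n - 1) → G := fun i => σ ⟨0, hn⟩ * σ (Fin.cast (by omega) i.succ)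
    letI P : Subgroup G :=
      Subgroup.closure (Set.range τ ∪ {g | ∃ i j, g = ⁅σ i, σ j⁆})
    (∀ i, ∀ p ∈ P, Commute (τ i ^ 2) p) ∧
    (∀ p ∈ P, p ^ 4 = 1) ∧
    ∃ φ : W →* G, φ.range = P := by
  have hh : n - 1 + 1 = n := by omega
  set i0 : Fin n := ⟨0, hn⟩ with hi0
  set τ : Fin (n - 1) → G := fun i => σ i0 * σ (Fin.cast hh i.succ) with hτ
  set P : Subgroup G :=
      Subgroup.closure (Set.range τ ∪ {g | ∃ i j, g = ⁅σ i, σ j⁆}) with hP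
  show (∀ i, ∀ p ∈ P, Commute (τ i ^ 2) p) ∧ (∀ p ∈ P, p ^ 4 = 1) ∧
    ∃ φ : W →* G, φ.range = P
  have Hc : ∀ x y : G, ⁅x, y⁆ ∈ Subgroup.center G :=
    comm_central_all hgen (by rintro a ⟨i, rfl⟩ b ⟨j, rfl⟩; exact hcent i j)
  have Hc2 : ∀ x y : G, ⁅x, y⁆ ^ 2 = 1 :=
    comm_sq_all Hc hgen (by rintro a ⟨i, rfl⟩ b ⟨j, rfl⟩; exact hc2 i j)
  have Hsq : ∀ x : G, x ^ 2 ∈ Subgroup.center G ∧ x ^ 4 = 1 :=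
    sq_central_pow4 Hc hgen (by rintro a ⟨i, rfl⟩; exact hinv i) Hc2
  have hσinv : ∀ i, (σ i)⁻¹ = σ i := by
    intro i
    have : σ i * σ i = 1 := by rw [← pow_two]; exact hinv i
    exact inv_eq_of_mul_eq_one_right this
  set K : Subgroup G := Subgroup.closure (Set.range τ) with hK
  have hτdef : ∀ k : Fin (n - 1), τ k = σ i0 * σ (Fin.cast hh k.succ) := fun k => rfl
  have hτsq : ∀ k : Fin (n - 1), ⁅σ i0, σ (Fin.cast hh k.succ)⁆ = τ k ^ 2 := by
    intro k
    rw [hτdef k, commutatorElement_def, hσinv, hσinv, pow_two]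
    group
  have hzero : ∀ j : Fin n, ⁅σ i0, σ j⁆ ∈ K := by
    intro j
    by_cases hj : j.val = 0
    · have : j = i0 := Fin.ext hj
      rw [this, commutatorElement_self]
      exact one_mem K
    · set k : Fin (n - 1) := ⟨j.val - 1, by omega⟩ with hkdef
      have hk : Fin.cast hh k.succ = j := by
        apply Fin.ext
        simp [hkdef]
        omega
      rw [← hk, hτsq]
      exact pow_mem (Subgroup.subset_closure (Set.mem_range_self k)) 2
  have hzero' : ∀ i : Fin n, ⁅σ i, σ i0⁆ ∈ K := by
    intro i
    have e : ⁅σ i, σ i0⁆ = ⁅σ i0, σ i⁆⁻¹ := (commutatorElement_inv _ _).symm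
    rw [e]
    exact inv_mem (hzero i)
  have hcK : ∀ i j : Fin n, ⁅σ i, σ j⁆ ∈ K := by
    intro i j
    by_cases hi : i.val = 0
    · have : i = i0 := Fin.ext hi
      rw [this]; exact hzero j
    by_cases hj : j.val = 0
    · have : j = i0 := Fin.ext hj
      rw [this]; exact hzero' i
    set k : Fin (n - 1) := ⟨i.val - 1, by omega⟩ with hkdef
    set l : Fin (n - 1) := ⟨j.val - 1, by omega⟩ with hldef
    have hk : Fin.cast hh k.succ = i := by
      apply Fin.ext; simp [hkdef]; omega
    have hl : Fin.cast hh l.succ = j := by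
      apply Fin.ext; simp [hldef]; omega
    have hτk : τ k = σ i0 * σ i := by rw [hτdef k, hk]
    have hτl : τ l = σ i0 * σ j := by rw [hτdef l, hl]
    have expand : ⁅τ k, τ l⁆ =
        ⁅σ i0, σ i0⁆ * ⁅σ i0, σ j⁆ * (⁅σ i, σ i0⁆ * ⁅σ i, σ j⁆) := by
      rw [hτk, hτl, comm_mul_left Hc, comm_mul_right Hc, comm_mul_right Hc]
    have hsolve : ⁅σ i, σ j⁆ =
        (⁅σ i, σ i0⁆)⁻¹ * ((⁅σ i0, σ i0⁆ * ⁅σ i0, σ j⁆)⁻¹ * ⁅τ k, τ l⁆) := by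
      rw [expand]; group
    rw [hsolve]
    have hτkK : τ k ∈ K := Subgroup.subset_closure (Set.mem_range_self k)
    have hτlK : τ l ∈ K := Subgroup.subset_closure (Set.mem_range_self l)
    have hcom : ⁅τ k, τ l⁆ ∈ K := by
      rw [commutatorElement_def]
      exact mul_mem (mul_mem (mul_mem hτkK hτlK) (inv_mem hτkK)) (inv_mem hτlK)
    exact mul_mem (inv_mem (hzero' i))
      (mul_mem (inv_mem (mul_mem (hzero i0) (hzero j))) hcom)
  have hPK : P = K := by
    apply le_antisymm
    · refine (Subgroup.closure_le K).2 ?_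
      rintro x (hx | ⟨i, j, rfl⟩)
      · exact Subgroup.subset_closure hx
      · exact hcK i j
    · exact Subgroup.closure_mono Set.subset_union_left
  refine ⟨?_, ?_, ?_⟩
  · intro i p _
    exact (Subgroup.mem_center_iff.mp (Hsq (τ i)).1 p).symm
  · intro p _
    exact (Hsq p).2
  · obtain ⟨φ, hφ⟩ := hWuniv G (fun x => (Hsq x).2) (fun x => (Hsq x).1) τ
    refine ⟨φ, ?_⟩
    have h1 : φ.range = K := by
      rw [hK, MonoidHom.range_eq_map, ← hWgen, MonoidHom.map_closure, ← Set.range_comp]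
      have : φ ∘ w = τ := funext hφ
      rw [this]
    rw [h1, hPK]
end

section
/- Let V be a free ℤ-module of finite rank and consider the Koszul-type complex with K^{p,q} = Λᵖ V ⊗ Λ^q(Λ² V) and differential d(θ ⊗ ω₁∧⋯∧ω_q) = Σᵢ (−1)^{i+1}(θ ∧ ωᵢ) ⊗ (ω₁∧⋯∧ω̂ᵢ∧⋯∧ω_q). Then the homology H^{2,1} = ker(d : Λ²V⊗Λ²V → Λ⁴V)/im(d : Λ²(Λ²V) → Λ²V⊗Λ²V) is torsion-free as a ℤ-module; in fact it embeds into the free module S²(Λ²V). -/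
set_option synthInstance.maxHeartbeats 1000000
set_option maxHeartbeats 2000000

open TensorProduct ExteriorAlgebra

/-- The wedge `v₁ ∧ ⋯ ∧ vₖ`, as an element of the `k`-th exterior power `⋀[ℤ]^k M`. -/
def wedgeι {M : Type*} [AddCommGroup M] [Module ℤ M] {k : ℕ} (v : Fin k → M) :
    ⋀[ℤ]^k M :=
  ⟨ExteriorAlgebra.ιMulti ℤ k v, ExteriorAlgebra.ιMulti_range ℤ k (Set.mem_range_self v)⟩

/-- The second symmetric power `S²W`, realized as the cokernel of the antisymmetrization map
`Λ²W → W ⊗ W`, `u∧v ↦ u⊗v − v⊗u`. -/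
abbrev Sym2Mod (W : Type*) [AddCommGroup W] [Module ℤ W] : Type _ :=
  (W ⊗[ℤ] W) ⧸ Submodule.span ℤ {x : W ⊗[ℤ] W | ∃ u v : W, x = u ⊗ₜ v - v ⊗ₜ u}

section Aux

lemma intModule_eq {M : Type*} [AddCommGroup M] (i1 i2 : Module ℤ M) : i1 = i2 :=
  @Subsingleton.elim _ (@Unique.instSubsingleton _ AddCommGroup.uniqueIntModule) _ _

/-- Transport a linear map across (propositionally equal) `ℤ`-module structures. -/
noncomputable def lmTrans {M N : Type*} [AddCommGroup M] [AddCommGroup N]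
    {i1 i2 : Module ℤ M} {j1 j2 : Module ℤ N}
    (f : @LinearMap ℤ ℤ _ _ (RingHom.id ℤ) M N _ _ i1 j1) :
    @LinearMap ℤ ℤ _ _ (RingHom.id ℤ) M N _ _ i2 j2 :=
  (intModule_eq i1 i2) ▸ (intModule_eq j1 j2) ▸ f

lemma lmTrans_apply {M N : Type*} [AddCommGroup M] [AddCommGroup N]
    {i1 i2 : Module ℤ M} {j1 j2 : Module ℤ N}
    (f : @LinearMap ℤ ℤ _ _ (RingHom.id ℤ) M N _ _ i1 j1) (x : M) :
    lmTrans (i2 := i2) (j2 := j2) f x = f x := by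
  cases intModule_eq i1 i2
  cases intModule_eq j1 j2
  rfl

/-- Transport a basis across (propositionally equal) `ℤ`-module structures. -/
noncomputable def bTrans {M : Type*} [AddCommGroup M] {κ : Type*} {i1 i2 : Module ℤ M}
    (B : @Module.Basis κ ℤ M _ _ i1) : @Module.Basis κ ℤ M _ _ i2 :=
  (intModule_eq i1 i2) ▸ B

noncomputable def reprFun {M κ : Type*} [AddCommMonoid M] {i : Module ℤ M}
    (B : @Module.Basis κ ℤ M _ _ i) (x : M) : κ →₀ ℤ :=
  B.repr x

lemma reprFun_trans {M κ : Type*} [AddCommGroup M] {i1 i2 : Module ℤ M}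
    (B : @Module.Basis κ ℤ M _ _ i1) (x : M) :
    reprFun (bTrans (i2 := i2) B) x = reprFun B x := by
  cases intModule_eq i1 i2
  rfl

variable {M : Type*} [AddCommGroup M] [Module ℤ M]

lemma coe_wedgeι {k : ℕ} (v : Fin k → M) :
    (wedgeι v : ExteriorAlgebra ℤ M) = ExteriorAlgebra.ιMulti ℤ k v := rfl

lemma fin2_eta {X : Type*} (v : Fin 2 → X) : ![v 0, v 1] = v := by
  ext i; fin_cases i <;> rfl

lemma ιMulti_two (u v : M) :
    ExteriorAlgebra.ιMulti ℤ 2 ![u, v] = ExteriorAlgebra.ι ℤ u * ExteriorAlgebra.ι ℤ v := by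
  rw [ExteriorAlgebra.ιMulti_apply]
  simp

/-- Wedging as a bilinear map into the second exterior power. -/
noncomputable def wedge2 :
    M →ₗ[ℤ] M →ₗ[ℤ] (⋀[ℤ]^2 M : Submodule ℤ (ExteriorAlgebra ℤ M)) :=
  LinearMap.mk₂ ℤ (fun u v => wedgeι ![u, v])
    (fun u u' v => Subtype.ext (by
      simp only [Submodule.coe_add, coe_wedgeι, ιMulti_two, map_add, add_mul]))
    (fun c u v => Subtype.ext (by
      simp only [SetLike.val_smul, coe_wedgeι, ιMulti_two, map_smul, smul_mul_assoc]
      simp [coe_wedgeι, ιMulti_two, mul_assoc, zsmul_eq_mul]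
      exact zsmul_eq_mul ((ι ℤ) u * (ι ℤ) v) c))
    (fun u v v' => Subtype.ext (by
      simp only [Submodule.coe_add, coe_wedgeι, ιMulti_two, map_add, mul_add]))
    (fun c u v => Subtype.ext (by
      simp only [SetLike.val_smul, coe_wedgeι, ιMulti_two, map_smul, mul_smul_comm]
      simp [coe_wedgeι, ιMulti_two, mul_assoc, zsmul_eq_mul]
      exact zsmul_eq_mul ((ι ℤ) u * (ι ℤ) v) c))

@[simp] lemma wedge2_apply (u v : M) : wedge2 u v = wedgeι ![u, v] := rfl

lemma wedge2_same (u : M) : wedge2 u u = 0 :=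
  Subtype.ext (by
    simp only [wedge2_apply, coe_wedgeι, ιMulti_two, ZeroMemClass.coe_zero]
    exact ExteriorAlgebra.ι_sq_zero u)

lemma wedge2_swap (u v : M) : wedge2 u v = - wedge2 v u := by
  apply Subtype.ext
  have h : (↑(-(wedge2 v u)) : ExteriorAlgebra ℤ M)
      = -(ExteriorAlgebra.ι ℤ v * ExteriorAlgebra.ι ℤ u) := by
    simp only [wedge2_apply]
    rw [show (↑(-(wedgeι ![v, u])) : ExteriorAlgebra ℤ M) = -(↑(wedgeι ![v, u])) from rfl]
    rw [coe_wedgeι, ιMulti_two]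
  rw [h]
  simp only [wedge2_apply, coe_wedgeι, ιMulti_two]
  exact eq_neg_of_add_eq_zero_left (ExteriorAlgebra.ι_add_mul_swap u v)

lemma wedgeι_span (k : ℕ) :
    Submodule.span ℤ (Set.range (wedgeι (M := M) (k := k))) = ⊤ := by
  rw [intModule_eq (AddCommGroup.toIntModule _) (⋀[ℤ]^k M).module]
  apply Submodule.map_injective_of_injective (Submodule.injective_subtype (⋀[ℤ]^k M))
  rw [Submodule.map_span, Submodule.map_top, Submodule.range_subtype]
  have h : (Submodule.subtype (⋀[ℤ]^k M)) '' Set.range (wedgeι (M := M) (k := k))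
      = Set.range (ExteriorAlgebra.ιMulti ℤ k (M := M)) := by
    rw [← Set.range_comp]
    rfl
  rw [h]
  exact ExteriorAlgebra.ιMulti_span_fixedDegree ℤ k

/-- Key lemma: an antisymmetric element of `W ⊗ W` (for `W` with a finite ordered basis) lies in
the span of the elementary antisymmetric tensors. -/
lemma antisym_mem_span {W : Type*} [AddCommGroup W] [Module ℤ W] {κ : Type*}
    [Fintype κ] [LinearOrder κ] (b : Module.Basis κ ℤ W)
    (B : Module.Basis (κ × κ) ℤ (W ⊗[ℤ] W))
    (hBr : ∀ (u v : W) (k l : κ), B.repr (u ⊗ₜ v) (k, l) = b.repr u k * b.repr v l)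
    (τ : W ⊗[ℤ] W →ₗ[ℤ] W ⊗[ℤ] W) (hτ : ∀ u v : W, τ (u ⊗ₜ v) = v ⊗ₜ u)
    (x : W ⊗[ℤ] W) (hx : τ x = -x) :
    x ∈ Submodule.span ℤ {y : W ⊗[ℤ] W | ∃ u v : W, y = u ⊗ₜ v - v ⊗ₜ u} := by
  classical
  set S := Submodule.span ℤ {y : W ⊗[ℤ] W | ∃ u v : W, y = u ⊗ₜ v - v ⊗ₜ u} with hS
  have hB : ∀ i j : κ, B (i, j) = b i ⊗ₜ b j := by
    intro i j
    apply B.repr.injective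
    rw [B.repr_self]
    ext q
    obtain ⟨k, l⟩ := q
    rw [hBr, b.repr_self, b.repr_self, Finsupp.single_apply, Finsupp.single_apply,
      Finsupp.single_apply]
    by_cases h1 : i = k <;> by_cases h2 : j = l <;>
      simp [h1, h2, Prod.ext_iff]
  have hcomm : ∀ (y : W ⊗[ℤ] W) (k l : κ), B.repr (τ y) (k, l) = B.repr y (l, k) := by
    intro y
    induction y using TensorProduct.induction_on with
    | zero => simp
    | tmul u v => intro k l; rw [hτ, hBr, hBr, mul_comm]
    | add y z hy hz =>
      intro k l
      simp [map_add, Finsupp.add_apply, hy k l, hz k l]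
  have hanti : ∀ k l : κ, B.repr x (l, k) = - B.repr x (k, l) := by
    intro k l
    have h1 := hcomm x l k
    rw [hx, map_neg, Finsupp.neg_apply] at h1
    omega
  set g : κ × κ → W ⊗[ℤ] W :=
    fun p => if p.1 < p.2 then b p.1 ⊗ₜ b p.2 - b p.2 ⊗ₜ b p.1 else 0 with hg
  have hgS : ∀ p, g p ∈ S := by
    intro p
    by_cases h : p.1 < p.2
    · exact Submodule.subset_span ⟨b p.1, b p.2, by simp [hg, h]⟩
    · simp [hg, h]
  have hgrepr : ∀ (p : κ × κ) (k l : κ), B.repr (g p) (k, l)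
      = if p.1 < p.2 then
          ((if p = (k, l) then (1:ℤ) else 0) - (if (p.2, p.1) = (k, l) then (1:ℤ) else 0))
        else 0 := by
    rintro ⟨i, j⟩ k l
    by_cases h : i < j
    · simp only [hg, if_pos h]
      rw [← hB, ← hB, map_sub, Finsupp.sub_apply, B.repr_self, B.repr_self,
        Finsupp.single_apply, Finsupp.single_apply]
    · simp [hg, h]
  have key : ∑ p : κ × κ, B.repr x p • g p = x := by
    apply B.repr.injective
    ext q
    obtain ⟨k, l⟩ := q
    rw [map_sum]
    have hsum : (∑ p : κ × κ, B.repr (B.repr x p • g p)) (k, l)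
        = ∑ p : κ × κ, B.repr x p * B.repr (g p) (k, l) := by
      rw [Finsupp.finset_sum_apply]
      refine Finset.sum_congr rfl fun p _ => ?_
      rw [map_smul, Finsupp.smul_apply, smul_eq_mul]
    rw [hsum]
    rcases lt_trichotomy k l with hkl | hkl | hkl
    · rw [Finset.sum_eq_single (k, l)]
      · rw [hgrepr]
        have h2 : ((l, k) : κ × κ) ≠ (k, l) := by
          intro h2
          rw [Prod.mk.injEq] at h2
          rw [h2.1] at hkl
          exact lt_irrefl _ hkl
        simp [hkl, h2]
      · rintro ⟨i, j⟩ - hne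
        rw [hgrepr]
        by_cases h : i < j
        · have h1 : ((i, j) : κ × κ) ≠ (k, l) := hne
          have h2 : ((j, i) : κ × κ) ≠ (k, l) := by
            intro h2
            rw [Prod.mk.injEq] at h2
            rw [← h2.1, ← h2.2] at hkl
            exact lt_irrefl _ (h.trans hkl)
          simp [h, h1, h2]
        · simp [h]
      · intro h; exact absurd (Finset.mem_univ _) h
    · subst hkl
      have hz : ∑ p : κ × κ, B.repr x p * B.repr (g p) (k, k) = 0 := by
        apply Finset.sum_eq_zero
        rintro ⟨i, j⟩ -
        rw [hgrepr]
        by_cases h : i < j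
        · have h1 : ((i, j) : κ × κ) ≠ (k, k) := by
            intro h1
            rw [Prod.mk.injEq] at h1
            rw [h1.1, h1.2] at h
            exact lt_irrefl _ h
          have h2 : ((j, i) : κ × κ) ≠ (k, k) := by
            intro h2
            rw [Prod.mk.injEq] at h2
            rw [h2.1, h2.2] at h
            exact lt_irrefl _ h
          simp [h, h1, h2]
        · simp [h]
      rw [hz]
      have h1 := hanti k k
      omega
    · rw [Finset.sum_eq_single (l, k)]
      · rw [hgrepr]
        have h1 : ((l, k) : κ × κ) ≠ (k, l) := by
          intro h1
          rw [Prod.mk.injEq] at h1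
          rw [h1.1] at hkl
          exact lt_irrefl _ hkl
        rw [if_pos hkl, if_neg h1, if_pos rfl]
        have h3 := hanti l k
        omega
      · rintro ⟨i, j⟩ - hne
        rw [hgrepr]
        by_cases h : i < j
        · have h1 : ((i, j) : κ × κ) ≠ (k, l) := by
            intro h1
            rw [Prod.mk.injEq] at h1
            rw [h1.1, h1.2] at h
            exact lt_irrefl _ (hkl.trans h)
          have h2 : ((j, i) : κ × κ) ≠ (k, l) := by
            intro h2
            rw [Prod.mk.injEq] at h2
            exact hne (by rw [Prod.mk.injEq]; exact ⟨h2.2, h2.1⟩)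
          simp [h, h1, h2]
        · simp [h]
      · intro h; exact absurd (Finset.mem_univ _) h
  rw [← key]
  exact Submodule.sum_mem _ fun p _ => Submodule.smul_mem _ _ (hgS p)


section BasisConstruction

variable {V : Type*} [AddCommGroup V] [Module ℤ V]

/-- The bilinear "coefficient matrix" map associated to a basis. -/
noncomputable def coefBl {n : ℕ} (e : Module.Basis (Fin n) ℤ V) :
    V →ₗ[ℤ] V →ₗ[ℤ] (Fin n → Fin n → ℤ) :=
  LinearMap.mk₂ ℤ (fun u v k l => e.repr u k * e.repr v l - e.repr u l * e.repr v k)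
    (fun u u' v => by funext k l; simp only [map_add, Finsupp.add_apply, Pi.add_apply]; ring)
    (fun c u v => by
      funext k l
      simp only [map_smul, Finsupp.smul_apply, smul_eq_mul, Pi.smul_apply, Pi.add_apply]
      ring)
    (fun u v v' => by funext k l; simp only [map_add, Finsupp.add_apply, Pi.add_apply]; ring)
    (fun c u v => by
      funext k l
      simp only [map_smul, Finsupp.smul_apply, smul_eq_mul, Pi.smul_apply, Pi.add_apply]
      ring)

lemma coefBl_apply {n : ℕ} (e : Module.Basis (Fin n) ℤ V) (u v : V) (k l : Fin n) :
    coefBl e u v k l = e.repr u k * e.repr v l - e.repr u l * e.repr v k := rfl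

/-- The coefficient map as an alternating map. -/
noncomputable def coefAlt {n : ℕ} (e : Module.Basis (Fin n) ℤ V) :
    V [⋀^Fin 2]→ₗ[ℤ] (Fin n → Fin n → ℤ) where
  toFun := fun v => coefBl e (v 0) (v 1)
  map_update_add' := by
    intro dec m i x y
    have h10 : (1 : Fin 2) ≠ 0 := Fin.ne_of_val_ne (by norm_num)
    fin_cases i <;>
      simp [Function.update_self, Function.update_of_ne h10,
        Function.update_of_ne h10.symm, map_add]
  map_update_smul' := by
    intro dec m i c x
    have h10 : (1 : Fin 2) ≠ 0 := Fin.ne_of_val_ne (by norm_num)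
    fin_cases i <;>
      simp [Function.update_self, Function.update_of_ne h10,
        Function.update_of_ne h10.symm, map_smul]
  map_eq_zero_of_eq' := by
    intro v i j hveq hne
    have h01 : v 0 = v 1 := by
      fin_cases i <;> fin_cases j <;> simp_all
    show coefBl e (v 0) (v 1) = 0
    rw [h01]
    funext k l
    simp only [Pi.zero_apply]
    rw [coefBl_apply]
    ring

/-- The coefficient functionals on the second exterior power. -/
noncomputable def coefPhi {n : ℕ} (e : Module.Basis (Fin n) ℤ V) :
    (⋀[ℤ]^2 V : Submodule ℤ (ExteriorAlgebra ℤ V)) →ₗ[ℤ] (Fin n → Fin n → ℤ) :=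
  (ExteriorAlgebra.liftAlternating
    (fun i => match i with
      | 2 => coefAlt e
      | _ => 0)).comp (Submodule.subtype _)

lemma coefPhi_wedge {n : ℕ} (e : Module.Basis (Fin n) ℤ V) (u v : V) :
    coefPhi e (wedge2 u v) = coefBl e u v := by
  show ExteriorAlgebra.liftAlternating _ (ExteriorAlgebra.ιMulti ℤ 2 ![u, v]) = coefBl e u v
  rw [ExteriorAlgebra.liftAlternating_apply_ιMulti]
  show coefBl e (![u, v] 0) (![u, v] 1) = coefBl e u v
  rfl

lemma coefPhi_wedge_basis {n : ℕ} (e : Module.Basis (Fin n) ℤ V) (i j k l : Fin n)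
    (hij : i < j) (hkl : k < l) :
    coefPhi e (wedge2 (e i) (e j)) k l = if i = k ∧ j = l then 1 else 0 := by
  rw [coefPhi_wedge]
  rw [show coefBl e (e i) (e j) k l
      = e.repr (e i) k * e.repr (e j) l - e.repr (e i) l * e.repr (e j) k from rfl]
  rw [e.repr_self, e.repr_self, Finsupp.single_apply, Finsupp.single_apply,
    Finsupp.single_apply, Finsupp.single_apply]
  have hsec : (if i = l then (1:ℤ) else 0) * (if j = k then 1 else 0) = 0 := by
    rcases eq_or_ne i l with rfl | hi
    · rcases eq_or_ne j k with rfl | hj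
      · exact absurd (hkl.trans hij) (lt_irrefl _)
      · simp [hj]
    · simp [hi]
  rw [hsec, sub_zero]
  by_cases h1 : i = k <;> by_cases h2 : j = l <;> simp [h1, h2]

/-- A basis of the second exterior power of a module with a finite basis. -/
noncomputable def basisExtSq {n : ℕ} (e : Module.Basis (Fin n) ℤ V) :
    Module.Basis {p : Fin n × Fin n // p.1 < p.2} ℤ
      (⋀[ℤ]^2 V : Submodule ℤ (ExteriorAlgebra ℤ V)) :=
  Module.Basis.mk (v := fun q => wedge2 (e q.1.1) (e q.1.2))
    (by
      rw [linearIndependent_iff']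
      intro s g hsum q hq
      obtain ⟨⟨k, l⟩, hkl⟩ := q
      have h0 := congrArg (coefPhi e) hsum
      rw [map_sum, map_zero] at h0
      have h1 : ∑ p ∈ s, g p * coefPhi e (wedge2 (e p.1.1) (e p.1.2)) k l = 0 := by
        have h2 := congrFun (congrFun h0 k) l
        simpa [Finset.sum_apply, map_smul] using h2
      have hval' : ∀ p : {p : Fin n × Fin n // p.1 < p.2},
          coefPhi e (wedge2 (e p.1.1) (e p.1.2)) k l
            = if p = ⟨(k, l), hkl⟩ then 1 else 0 := by
        rintro ⟨⟨i, j⟩, hij⟩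
        rw [coefPhi_wedge_basis e i j k l hij hkl]
        have hiff : (i = k ∧ j = l)
            ↔ ((⟨(i, j), hij⟩ : {p : Fin n × Fin n // p.1 < p.2}) = ⟨(k, l), hkl⟩) := by
          constructor
          · rintro ⟨rfl, rfl⟩; rfl
          · intro hh; simpa [Subtype.ext_iff, Prod.ext_iff] using hh
        exact if_congr hiff rfl rfl
      rw [Finset.sum_eq_single (⟨(k, l), hkl⟩ : {p : Fin n × Fin n // p.1 < p.2})] at h1
      · rw [hval'] at h1
        simpa using h1
      · intro p hp hne
        rw [hval', if_neg hne, mul_zero]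
      · intro h; exact absurd hq h)
    (by
      have hw : ∀ u v : V, wedge2 u v ∈ Submodule.span ℤ
          (Set.range fun q : {p : Fin n × Fin n // p.1 < p.2} =>
            wedge2 (e q.1.1) (e q.1.2)) := by
        intro u v
        have hu : u ∈ Submodule.span ℤ (Set.range e) := by rw [e.span_eq]; trivial
        have hv : v ∈ Submodule.span ℤ (Set.range e) := by rw [e.span_eq]; trivial
        induction hu using Submodule.span_induction with
        | mem z hz =>
          obtain ⟨i, rfl⟩ := hz
          induction hv using Submodule.span_induction with
          | mem w hw' =>
            obtain ⟨j, rfl⟩ := hw'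
            rcases lt_trichotomy i j with h | h | h
            · exact Submodule.subset_span ⟨⟨(i, j), h⟩, rfl⟩
            · subst h; rw [wedge2_same]; exact Submodule.zero_mem _
            · rw [wedge2_swap]
              exact Submodule.neg_mem _ (Submodule.subset_span ⟨⟨(j, i), h⟩, rfl⟩)
          | zero => rw [map_zero]; exact Submodule.zero_mem _
          | add a c _ _ iha ihc => rw [map_add]; exact Submodule.add_mem _ iha ihc
          | smul r a _ iha =>
            rw [(wedge2 (e i)).map_smul]; exact Submodule.smul_mem _ _ iha
        | zero => rw [map_zero, LinearMap.zero_apply]; exact Submodule.zero_mem _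
        | add a c _ _ iha ihc =>
          rw [map_add, LinearMap.add_apply]; exact Submodule.add_mem _ iha ihc
        | smul r a _ iha =>
          convert Submodule.smul_mem _ r iha using 1
          convert LinearMap.congr_fun (wedge2.map_smul r a) v using 3
          rfl
      intro x _hx
      clear _hx
      have hx : x ∈ Submodule.span ℤ (Set.range (wedgeι (M := V) (k := 2))) := by
        rw [wedgeι_span]; trivial
      induction hx using Submodule.span_induction with
      | mem z hz =>
        obtain ⟨v, rfl⟩ := hz
        rw [← fin2_eta v]
        exact hw (v 0) (v 1)
      | zero => exact Submodule.zero_mem _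
      | add y z _ _ ihy ihz => exact Submodule.add_mem _ ihy ihz
      | smul c y _ ihy => exact Submodule.smul_mem _ _ ihy)

end BasisConstruction

section Homology

open TensorProduct

/-- The homology embeds into `Sym2Mod W` and is torsion-free, given the identification of the
image of `d1` with the span of antisymmetric tensors. -/
lemma H_torsionfree_and_embed {W Z Q : Type*} [AddCommGroup W] [Module ℤ W]
    [AddCommGroup Z] [Module ℤ Z] [AddCommGroup Q] [Module ℤ Q]
    {κ : Type*} [Fintype κ] [LinearOrder κ] (b : Module.Basis κ ℤ W)
    (B : Module.Basis (κ × κ) ℤ (W ⊗[ℤ] W))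
    (hBr : ∀ (u v : W) (k l : κ), B.repr (u ⊗ₜ v) (k, l) = b.repr u k * b.repr v l)
    (τ : W ⊗[ℤ] W →ₗ[ℤ] W ⊗[ℤ] W) (hτ : ∀ u v : W, τ (u ⊗ₜ v) = v ⊗ₜ u)
    (d1 : Q →ₗ[ℤ] (W ⊗[ℤ] W)) (d2 : (W ⊗[ℤ] W) →ₗ[ℤ] Z)
    (hreq : LinearMap.range d1
      = Submodule.span ℤ {y : W ⊗[ℤ] W | ∃ u v : W, y = u ⊗ₜ v - v ⊗ₜ u}) :
    (∀ (c : ℤ) (h : (LinearMap.ker d2) ⧸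
        ((LinearMap.range d1).comap (LinearMap.ker d2).subtype)),
      c • h = 0 → c = 0 ∨ h = 0) ∧
    (∃ f : ((LinearMap.ker d2) ⧸
        ((LinearMap.range d1).comap (LinearMap.ker d2).subtype)) →ₗ[ℤ]
        Sym2Mod W,
      Function.Injective f) := by
  classical
  have hkerg : LinearMap.ker
      ((Submodule.span ℤ {y : W ⊗[ℤ] W | ∃ u v : W, y = u ⊗ₜ v - v ⊗ₜ u}).mkQ.comp
        (LinearMap.ker d2).subtype)
      = (LinearMap.range d1).comap (LinearMap.ker d2).subtype := by
    ext x
    simp only [LinearMap.mem_ker, LinearMap.coe_comp, Function.comp_apply,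
      Submodule.coe_subtype, Submodule.mkQ_apply, Submodule.Quotient.mk_eq_zero,
      Submodule.mem_comap, hreq]
  set f : ((LinearMap.ker d2) ⧸
      ((LinearMap.range d1).comap (LinearMap.ker d2).subtype)) →ₗ[ℤ] Sym2Mod W :=
    Submodule.liftQ _ _ hkerg.ge with hf
  have hfinj : Function.Injective f := by
    rw [← LinearMap.ker_eq_bot]
    exact Submodule.ker_liftQ_eq_bot _ _ _ hkerg.le
  have hLS : Submodule.span ℤ {y : W ⊗[ℤ] W | ∃ u v : W, y = u ⊗ₜ v - v ⊗ₜ u}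
      ≤ LinearMap.ker (LinearMap.id + τ) := by
    apply Submodule.span_le.mpr
    rintro y ⟨u, v, rfl⟩
    simp only [SetLike.mem_coe, LinearMap.mem_ker, LinearMap.add_apply, LinearMap.id_apply,
      map_sub, hτ]
    abel
  set φ : Sym2Mod W →ₗ[ℤ] (W ⊗[ℤ] W) := Submodule.liftQ _ _ hLS with hφ
  have hφinj : Function.Injective φ := by
    rw [← LinearMap.ker_eq_bot]
    apply Submodule.ker_liftQ_eq_bot
    intro x hx
    rw [LinearMap.mem_ker, LinearMap.add_apply, LinearMap.id_apply] at hx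
    rw [add_comm] at hx
    exact antisym_mem_span b B hBr τ hτ x (eq_neg_of_add_eq_zero_left hx)
  have hTF : ∀ (c : ℤ), c ≠ 0 → ∀ (y : W ⊗[ℤ] W), c • y = 0 → y = 0 := by
    intro c hc y hy
    have h2 := congrArg B.repr hy
    rw [map_smul, map_zero] at h2
    have h3 : B.repr y = 0 := by
      ext p
      have h4 := DFunLike.congr_fun h2 p
      rw [Finsupp.smul_apply, smul_eq_mul] at h4
      rcases mul_eq_zero.mp h4 with h | h
      · exact absurd h hc
      · simpa using h
    simpa using B.repr.map_eq_zero_iff.mp h3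
  refine ⟨?_, f, hfinj⟩
  intro c h hch
  by_cases hc : c = 0
  · exact Or.inl hc
  · right
    have h1 : φ (f (c • h)) = 0 := by rw [hch, map_zero, map_zero]
    rw [map_smul, map_smul] at h1
    have h2 : φ (f h) = 0 := hTF c hc _ h1
    have h3 : f h = 0 := by
      apply hφinj
      rw [h2, map_zero]
    apply hfinj
    rw [h3, map_zero]

end Homology

end Aux

/-- Let `V` be a free `ℤ`-module of finite rank and consider the
Koszul-type complex with `K^{p,q} = ΛᵖV ⊗ Λ^q(Λ²V)` and differential
`d(θ ⊗ ω₁∧⋯∧ω_q) = Σᵢ (−1)^(i+1) (θ∧ωᵢ) ⊗ (ω₁∧⋯∧ω̂ᵢ∧⋯∧ω_q)`.  Then the homology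
`H^{2,1} = ker(d : Λ²V⊗Λ²V → Λ⁴V) / im(d : Λ²(Λ²V) → Λ²V⊗Λ²V)` is torsion-free as a
`ℤ`-module; in fact it embeds into the free module `S²(Λ²V)`.  The two differentials are
characterized by their values on the spanning wedges. -/
theorem stmt11 (V : Type) [AddCommGroup V] [Module ℤ V]
    [Module.Free ℤ V] [Module.Finite ℤ V]
    (d1 : (⋀[ℤ]^2 (⋀[ℤ]^2 V) : Submodule ℤ _) →ₗ[ℤ]
      ((⋀[ℤ]^2 V : Submodule ℤ _) ⊗[ℤ] (⋀[ℤ]^2 V : Submodule ℤ _)))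
    (d2 : ((⋀[ℤ]^2 V : Submodule ℤ _) ⊗[ℤ] (⋀[ℤ]^2 V : Submodule ℤ _)) →ₗ[ℤ]
      (⋀[ℤ]^4 V : Submodule ℤ _))
    (hd1 : ∀ ω₁ ω₂ : ⋀[ℤ]^2 V,
      d1 (wedgeι ![ω₁, ω₂]) = ω₁ ⊗ₜ ω₂ - ω₂ ⊗ₜ ω₁)
    (hd2 : ∀ v w : Fin 2 → V,
      d2 (wedgeι v ⊗ₜ wedgeι w) = wedgeι (Fin.append v w))
    (hchain : ∀ x, d2 (d1 x) = 0) :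
    (∀ (c : ℤ) (h : (LinearMap.ker d2) ⧸
        ((LinearMap.range d1).comap (LinearMap.ker d2).subtype)),
      c • h = 0 → c = 0 ∨ h = 0) ∧
    (∃ f : ((LinearMap.ker d2) ⧸
        ((LinearMap.range d1).comap (LinearMap.ker d2).subtype)) →ₗ[ℤ]
        Sym2Mod (⋀[ℤ]^2 V : Submodule ℤ _),
      Function.Injective f) := by
  classical
  haveI hfree : Module.Free ℤ (⋀[ℤ]^2 V : Submodule ℤ _) :=
    Module.Free.of_basis (basisExtSq (Module.finBasis ℤ V))
  haveI hfin : Module.Finite ℤ (⋀[ℤ]^2 V : Submodule ℤ _) :=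
    Module.Finite.of_basis (basisExtSq (Module.finBasis ℤ V))
  have hreq : LinearMap.range d1
      = Submodule.span ℤ {y | ∃ u v : (⋀[ℤ]^2 V : Submodule ℤ _), y = u ⊗ₜ v - v ⊗ₜ u} := by
    apply le_antisymm
    · rintro x ⟨y, rfl⟩
      have hy : y ∈ Submodule.span ℤ
          (Set.range (wedgeι (M := (⋀[ℤ]^2 V : Submodule ℤ _)) (k := 2))) := by
        rw [wedgeι_span]; trivial
      induction hy using Submodule.span_induction with
      | mem z hz =>
        obtain ⟨v, rfl⟩ := hz
        rw [← fin2_eta v, hd1]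
        exact Submodule.subset_span ⟨v 0, v 1, rfl⟩
      | zero => rw [map_zero]; exact Submodule.zero_mem _
      | add y z _ _ ihy ihz => rw [map_add]; exact Submodule.add_mem _ ihy ihz
      | smul c y _ ihy => rw [map_smul]; exact Submodule.smul_mem _ _ ihy
    · apply Submodule.span_le.mpr
      rintro y ⟨u, v, rfl⟩
      exact ⟨wedgeι ![u, v], hd1 u v⟩
  refine H_torsionfree_and_embed (Module.finBasis ℤ _)
    (bTrans ((Module.finBasis ℤ (⋀[ℤ]^2 V : Submodule ℤ _)).tensorProduct
      (Module.finBasis ℤ (⋀[ℤ]^2 V : Submodule ℤ _)))) ?_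
    (lmTrans (TensorProduct.comm ℤ _ _).toLinearMap) ?_ d1 d2 hreq
  · intro u v k l
    have h1 := reprFun_trans (i2 := inferInstance)
      ((Module.finBasis ℤ (⋀[ℤ]^2 V : Submodule ℤ _)).tensorProduct
        (Module.finBasis ℤ (⋀[ℤ]^2 V : Submodule ℤ _))) (u ⊗ₜ[ℤ] v)
    rw [show (bTrans ((Module.finBasis ℤ (⋀[ℤ]^2 V : Submodule ℤ _)).tensorProduct
        (Module.finBasis ℤ (⋀[ℤ]^2 V : Submodule ℤ _)))).repr (u ⊗ₜ[ℤ] v)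
      = reprFun (bTrans ((Module.finBasis ℤ (⋀[ℤ]^2 V : Submodule ℤ _)).tensorProduct
        (Module.finBasis ℤ (⋀[ℤ]^2 V : Submodule ℤ _)))) (u ⊗ₜ[ℤ] v) from rfl, h1]
    rw [show reprFun ((Module.finBasis ℤ (⋀[ℤ]^2 V : Submodule ℤ _)).tensorProduct
        (Module.finBasis ℤ (⋀[ℤ]^2 V : Submodule ℤ _))) (u ⊗ₜ[ℤ] v)
      = ((Module.finBasis ℤ (⋀[ℤ]^2 V : Submodule ℤ _)).tensorProduct
        (Module.finBasis ℤ (⋀[ℤ]^2 V : Submodule ℤ _))).repr (u ⊗ₜ[ℤ] v) from rfl]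
    rw [Module.Basis.tensorProduct_repr_tmul_apply]
    rw [smul_eq_mul]
    ring
  · intro u v
    rw [lmTrans_apply]
    exact TensorProduct.comm_tmul ℤ _ _ u v
end

section
/- Let F be a field of characteristic ≠ 2 which is formally real but not pythagorean, so there exists a ∈ Ḟ with a ∉ Ḟ² and a = x² + y² for nonzero x, y ∈ F. Then in Milnor K-theory mod 2 of F, the class l(a)·l(−1)² = 0 in k₃F; in particular l(−1) is a zero divisor in k*F. -/
open MvPolynomial

/-- The defining ideal of Milnor K-theory mod 2: the commutative `𝔽₂`-algebra generated by
symbols `l(u)`, `u ∈ Ḟ`, subject to `l(ab) = l(a) + l(b)` and the Steinberg relations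
`l(a)l(b) = 0` whenever `a + b = 1`. -/
noncomputable def milnorIdeal (F : Type) [Field F] : Ideal (MvPolynomial Fˣ (ZMod 2)) :=
  Ideal.span
    ({p | ∃ a b : Fˣ, p = X (a * b) - X a - X b} ∪
     {p | ∃ a b : Fˣ, (a : F) + (b : F) = 1 ∧ p = X a * X b})

/-- Milnor K-theory mod 2, `k*F = K*F/2K*F`, via its standard presentation. -/
abbrev kMilnor (F : Type) [Field F] : Type :=
  MvPolynomial Fˣ (ZMod 2) ⧸ milnorIdeal F

/-- The symbol `l(a) ∈ k₁F` of a unit `a ∈ Ḟ`. -/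
noncomputable def lsym {F : Type} [Field F] (a : Fˣ) : kMilnor F :=
  Ideal.Quotient.mk (milnorIdeal F) (X a)

lemma lsym_mul {F : Type} [Field F] (a b : Fˣ) :
    lsym (a * b) = lsym a + lsym b := by
  have h : Ideal.Quotient.mk (milnorIdeal F) (X (a * b) - X a - X b) = 0 :=
    Ideal.Quotient.eq_zero_iff_mem.mpr
      (Ideal.subset_span (Or.inl ⟨a, b, rfl⟩))
  rw [map_sub, map_sub, sub_sub, sub_eq_zero] at h
  exact h

lemma lsym_steinberg {F : Type} [Field F] (a b : Fˣ)
    (h : (a : F) + (b : F) = 1) : lsym a * lsym b = 0 := by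
  have h' : Ideal.Quotient.mk (milnorIdeal F) (X a * X b) = 0 :=
    Ideal.Quotient.eq_zero_iff_mem.mpr
      (Ideal.subset_span (Or.inr ⟨a, b, h, rfl⟩))
  rw [map_mul] at h'
  exact h'

lemma kMilnor_add_self {F : Type} [Field F] (z : kMilnor F) : z + z = 0 := by
  have hm : (2 : MvPolynomial Fˣ (ZMod 2)) = 0 := by
    have h := CharP.cast_eq_zero (MvPolynomial Fˣ (ZMod 2)) 2
    simpa using h
  have h2 : (2 : kMilnor F) = 0 := by
    calc (2 : kMilnor F)
        = Ideal.Quotient.mk (milnorIdeal F) (2 : MvPolynomial Fˣ (ZMod 2)) :=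
          (map_ofNat _ 2).symm
      _ = 0 := by rw [hm, map_zero]
  rw [← two_mul, h2, zero_mul]

lemma lsym_sq_mul {F : Type} [Field F] (c w : Fˣ) :
    lsym (c ^ 2 * w) = lsym w := by
  rw [sq, mul_assoc, lsym_mul, lsym_mul, ← add_assoc, kMilnor_add_self, zero_add]

lemma exists_char {F : Type} [Field F] (a : Fˣ)
    (hnsq : ¬ ∃ c : F, (a : F) = c ^ 2) :
    ∃ χ : Fˣ → ZMod 2, (∀ u v : Fˣ, χ (u * v) = χ u + χ v) ∧ χ a ≠ 0 := by
  classical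
  haveI : ((powMonoidHom 2 : Fˣ →* Fˣ).range).Normal :=
    Subgroup.normal_of_comm _
  haveI : Module (ZMod 2) (Additive (Fˣ ⧸ (powMonoidHom 2 : Fˣ →* Fˣ).range)) :=
    AddCommGroup.zmodModule (n := 2)
      (G := Additive (Fˣ ⧸ (powMonoidHom 2 : Fˣ →* Fˣ).range)) (by
      intro v
      show 2 • v = 0
      rw [two_nsmul]
      obtain ⟨g, rfl⟩ : ∃ g : Fˣ ⧸ (powMonoidHom 2 : Fˣ →* Fˣ).range,
          Additive.ofMul g = v := ⟨Additive.toMul v, rfl⟩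
      show Additive.ofMul (g * g) = 0
      induction g using QuotientGroup.induction_on with
      | H g =>
        have hmem : g * g ∈ (powMonoidHom 2 : Fˣ →* Fˣ).range :=
          ⟨g, by simp [powMonoidHom, pow_two]⟩
        have h1 : ((QuotientGroup.mk g : Fˣ ⧸ (powMonoidHom 2 : Fˣ →* Fˣ).range)
            * QuotientGroup.mk g) = 1 := by
          rw [← QuotientGroup.mk_mul]
          exact (QuotientGroup.eq_one_iff _).mpr hmem
        rw [h1]
        rfl)
  have haV : (Additive.ofMul (QuotientGroup.mk a :
      Fˣ ⧸ (powMonoidHom 2 : Fˣ →* Fˣ).range)) ≠ 0 := by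
    intro h
    have h1 : (QuotientGroup.mk a : Fˣ ⧸ (powMonoidHom 2 : Fˣ →* Fˣ).range) = 1 := h
    rw [QuotientGroup.eq_one_iff] at h1
    obtain ⟨c, hc⟩ := h1
    refine hnsq ⟨(c : F), ?_⟩
    have h2 : ((c ^ 2 : Fˣ) : F) = (a : F) := by
      rw [show (c ^ 2 : Fˣ) = a from hc]
    simpa using h2.symm
  obtain ⟨f, hf⟩ :
      ∃ f : Module.Dual (ZMod 2)
          (Additive (Fˣ ⧸ (powMonoidHom 2 : Fˣ →* Fˣ).range)),
        f (Additive.ofMul (QuotientGroup.mk a :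
          Fˣ ⧸ (powMonoidHom 2 : Fˣ →* Fˣ).range)) ≠ 0 := by
    haveI := Module.Free.of_divisionRing (ZMod 2)
      (Additive (Fˣ ⧸ (powMonoidHom 2 : Fˣ →* Fˣ).range))
    by_contra hcon
    push_neg at hcon
    exact haV ((Module.forall_dual_apply_eq_zero_iff (ZMod 2) _).mp hcon)
  refine ⟨fun u => f (Additive.ofMul (QuotientGroup.mk u :
      Fˣ ⧸ (powMonoidHom 2 : Fˣ →* Fˣ).range)), fun u v => ?_, hf⟩
  show f (Additive.ofMul (QuotientGroup.mk (u * v) :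
      Fˣ ⧸ (powMonoidHom 2 : Fˣ →* Fˣ).range)) = _
  rw [QuotientGroup.mk_mul]
  have h3 : Additive.ofMul ((QuotientGroup.mk u :
        Fˣ ⧸ (powMonoidHom 2 : Fˣ →* Fˣ).range) * QuotientGroup.mk v)
      = Additive.ofMul (QuotientGroup.mk u :
        Fˣ ⧸ (powMonoidHom 2 : Fˣ →* Fˣ).range)
        + Additive.ofMul (QuotientGroup.mk v :
        Fˣ ⧸ (powMonoidHom 2 : Fˣ →* Fˣ).range) := rfl
  rw [h3, map_add]

lemma lsym_ne_zero {F : Type} [Field F] (a : Fˣ)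
    (hnsq : ¬ ∃ c : F, (a : F) = c ^ 2) : lsym a ≠ 0 := by
  obtain ⟨χ, hχ, hχa⟩ := exists_char a hnsq
  set R := TrivSqZeroExt (ZMod 2) (ZMod 2) with hR
  set φ : MvPolynomial Fˣ (ZMod 2) →ₐ[ZMod 2] R :=
    aeval (fun u => TrivSqZeroExt.inr (χ u)) with hφ
  have hker : milnorIdeal F ≤ RingHom.ker (φ : MvPolynomial Fˣ (ZMod 2) →+* R) := by
    rw [milnorIdeal, Ideal.span_le]
    rintro p (⟨u, v, rfl⟩ | ⟨u, v, huv, rfl⟩)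
    · show φ _ = 0
      simp only [map_sub, hφ, aeval_X]
      rw [hχ u v, TrivSqZeroExt.inr_add]
      abel
    · show φ _ = 0
      simp only [map_mul, hφ, aeval_X]
      exact TrivSqZeroExt.inr_mul_inr _ _ _
  intro h0
  set ψ : kMilnor F →+* R :=
    Ideal.Quotient.lift (milnorIdeal F)
      (φ : MvPolynomial Fˣ (ZMod 2) →+* R) (fun x hx => RingHom.mem_ker.mp (hker hx)) with hψ
  have heval : ψ (lsym a) = TrivSqZeroExt.inr (χ a) := by
    rw [lsym, hψ, Ideal.Quotient.lift_mk]
    simp [hφ]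
  rw [h0, map_zero] at heval
  apply hχa
  have h4 := congrArg TrivSqZeroExt.snd heval
  simpa using h4.symm

/-- Let `F` be a field of characteristic ≠ 2 which is formally real but
not pythagorean, so there exists `a ∈ Ḟ` with `a ∉ Ḟ²` and `a = x² + y²` for nonzero
`x, y ∈ F`.  Then in Milnor K-theory mod 2 of `F` the class `l(a)·l(−1)² = 0` (in `k₃F`);
in particular `l(−1)` is a zero divisor in `k*F`. -/
theorem stmt16 {F : Type} [Field F] (hchar : (2 : F) ≠ 0)
    (hreal : ∀ l : List F, (l.map (· ^ 2)).sum ≠ -1)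
    (a x y : F) (ha0 : a ≠ 0) (hx : x ≠ 0) (hy : y ≠ 0)
    (ha : a = x ^ 2 + y ^ 2)
    (hnsq : ¬ ∃ c : F, a = c ^ 2) :
    lsym (Units.mk0 a ha0) * lsym (-1 : Fˣ) ^ 2 = 0 ∧
    ∃ z : kMilnor F, z ≠ 0 ∧ z * lsym (-1 : Fˣ) = 0 := by
  set au : Fˣ := Units.mk0 a ha0
  set xu : Fˣ := Units.mk0 x hx
  set yu : Fˣ := Units.mk0 y hy
  -- the Steinberg pair u = a/x², v = -y²/x²
  set u : Fˣ := xu⁻¹ ^ 2 * au with hu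
  set v : Fˣ := (xu⁻¹ * yu) ^ 2 * (-1) with hv
  have hsum : (u : F) + (v : F) = 1 := by
    have hu' : (u : F) = x⁻¹ ^ 2 * a := by
      simp [hu, Units.val_mul, Units.val_pow_eq_pow_val, Units.val_inv_eq_inv_val, xu, au]
    have hv' : (v : F) = (x⁻¹ * y) ^ 2 * (-1) := by
      simp [hv, Units.val_mul, Units.val_pow_eq_pow_val, Units.val_inv_eq_inv_val, xu, yu]
    rw [hu', hv']
    field_simp
    linear_combination ha
  have key : lsym au * lsym (-1 : Fˣ) = 0 := by
    have h1 : lsym u = lsym au := lsym_sq_mul _ _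
    have h2 : lsym v = lsym (-1 : Fˣ) := lsym_sq_mul _ _
    rw [← h1, ← h2]
    exact lsym_steinberg u v hsum
  constructor
  · rw [pow_two, ← mul_assoc, key, zero_mul]
  · refine ⟨lsym au, ?_, key⟩
    exact lsym_ne_zero au (by simpa [au] using hnsq)
end
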